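/- arXiv:1103.0319 — 5 statements merged into one kernel-verified Lean document; each statement's English description precedes it below -/
import Mathlib

section
/- Lemma 2: Fix k ≥ 2. Let P be a rook placement on a Ferrers board F containing the pattern k…1, let D = D₁…D_k be the lexicographically value-smallest occurrence of k…1 in P (squares listed left to right), and let R = R(a,b) where a = col(D_k) and b = row(D₁). Then the restriction P_R of P to R contains no occurrence of k…1 that begins in a row strictly below row b (the top row of R) or ends in a column strictly to the left of column a (the rightmost column of R). -/
open scoped Classical

/-- A cell (square) of the grid: `(column, row)`, both `≥ 1` for genuine cells. -/
abbrev Cell : Type := ℕ × ℕ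

/-- The rectangle `R(a,b)` consisting of all cells `(i,j)` with `1 ≤ i ≤ a`, `1 ≤ j ≤ b`. -/
def Rect (a b : ℕ) : Finset Cell := Finset.Icc 1 a ×ˢ Finset.Icc 1 b

/-- A Ferrers board (French notation): a down-left closed finite set of cells with
positive coordinates. -/
def IsFerrers (F : Finset Cell) : Prop :=
  ∀ p ∈ F, 1 ≤ p.1 ∧ 1 ≤ p.2 ∧
    ∀ q : Cell, 1 ≤ q.1 → 1 ≤ q.2 → q.1 ≤ p.1 → q.2 ≤ p.2 → q ∈ F

/-- A rook placement on a board `F`: a subset of `F` with at most one cell in each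
column and at most one cell in each row. -/
def IsPlacement (F P : Finset Cell) : Prop :=
  P ⊆ F ∧ (∀ p ∈ P, ∀ q ∈ P, p.1 = q.1 → p = q) ∧
    (∀ p ∈ P, ∀ q ∈ P, p.2 = q.2 → p = q)

/-- A decreasing sequence in `P`: columns strictly increase, rows strictly decrease. -/
def IsDecSeq (P : Finset Cell) (k : ℕ) (S : Fin k → Cell) : Prop :=
  (∀ i, S i ∈ P) ∧ ∀ i j : Fin k, i < j → (S i).1 < (S j).1 ∧ (S j).2 < (S i).2

/-- An increasing sequence in `P`: columns and rows both strictly increase. -/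
def IsIncSeq (P : Finset Cell) (k : ℕ) (S : Fin k → Cell) : Prop :=
  (∀ i, S i ∈ P) ∧ ∀ i j : Fin k, i < j → (S i).1 < (S j).1 ∧ (S i).2 < (S j).2

/-- Lexicographic comparison of two sequences of cells by their rows (values),
entry by entry from the left. -/
def rowLexLE (k : ℕ) (S T : Fin k → Cell) : Prop :=
  (∀ i, (S i).2 = (T i).2) ∨
    ∃ i : Fin k, (S i).2 < (T i).2 ∧ ∀ j : Fin k, j < i → (S j).2 = (T j).2

/-- An occurrence of the decreasing pattern `k…1` in the placement `P` on the board `F`: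
a decreasing sequence of cells of `P`, all lying in a common rectangle contained in `F`. -/
def IsDecOcc (F P : Finset Cell) (k : ℕ) (D : Fin k → Cell) : Prop :=
  IsDecSeq P k D ∧ ∃ a b : ℕ, Rect a b ⊆ F ∧ ∀ i, D i ∈ Rect a b

/-- `D` is the lexicographically value-smallest occurrence of `k…1` in `P`. -/
def IsMinOcc (F P : Finset Cell) (k : ℕ) (D : Fin k → Cell) : Prop :=
  IsDecOcc F P k D ∧ ∀ S : Fin k → Cell, IsDecOcc F P k S → rowLexLE k D S

/-- Cyclic successor on `Fin k`. -/
def cyc (k : ℕ) (i : Fin k) : Fin k :=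
  ⟨(i.1 + 1) % k, Nat.mod_lt _ (Nat.lt_of_le_of_lt (Nat.zero_le _) i.isLt)⟩

/-- The action of `φ` on `P`, given the occurrence `D = D₁…D_k` of `k…1`: the columns of
`D₁,…,D_k` receive markers at the rows of `D₂,…,D_k,D₁` respectively; other cells are fixed. -/
def phiStep (k : ℕ) (D : Fin k → Cell) (P : Finset Cell) : Finset Cell :=
  (P \ Finset.image D Finset.univ) ∪
    Finset.image (fun i : Fin k => ((D i).1, (D (cyc k i)).2)) Finset.univ

lemma mem_Rect {a b : ℕ} {p : Cell} :
    p ∈ Rect a b ↔ (1 ≤ p.1 ∧ p.1 ≤ a) ∧ (1 ≤ p.2 ∧ p.2 ≤ b) := by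
  simp [Rect, Finset.mem_product, Finset.mem_Icc, and_assoc]

lemma Rect_mono {a b a' b' : ℕ} (ha : a ≤ a') (hb : b ≤ b') :
    Rect a b ⊆ Rect a' b' := by
  intro p hp
  rw [mem_Rect] at hp ⊢
  omega

lemma decseq_col_mono {P : Finset Cell} {k : ℕ} {S : Fin k → Cell}
    (h : IsDecSeq P k S) {i j : Fin k} (hij : i ≤ j) : (S i).1 ≤ (S j).1 := by
  rcases eq_or_lt_of_le hij with h' | h'
  · rw [h']
  · exact le_of_lt (h.2 i j h').1

lemma decseq_row_anti {P : Finset Cell} {k : ℕ} {S : Fin k → Cell}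
    (h : IsDecSeq P k S) {i j : Fin k} (hij : i ≤ j) : (S j).2 ≤ (S i).2 := by
  rcases eq_or_lt_of_le hij with h' | h'
  · rw [h']
  · exact le_of_lt (h.2 i j h').2

/-- If `D` is lex-minimal, no occurrence can agree with `D` up to position `i`
and be strictly row-smaller at `i`. -/
lemma not_smaller {F P : Finset Cell} {k : ℕ} {D : Fin k → Cell}
    (hmin : ∀ S : Fin k → Cell, IsDecOcc F P k S → rowLexLE k D S)
    {T : Fin k → Cell} (hT : IsDecOcc F P k T) {i : Fin k}
    (hlt : (T i).2 < (D i).2) (hpre : ∀ j : Fin k, j < i → (T j).2 = (D j).2) :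
    False := by
  rcases hmin T hT with hall | ⟨i', hi', hpre'⟩
  · have := hall i; omega
  · rcases lt_trichotomy i' i with h | h | h
    · have := hpre i' h; omega
    · subst h; omega
    · have := hpre' i h; omega

/-- **Lemma 2.** Fix `k ≥ 2`, let `D` be the value-smallest occurrence of `k…1` in the
placement `P` on the Ferrers board `F`, and let `R = R(a,b)` with `a = col(D_k)`,
`b = row(D₁)`. Then the restriction of `P` to `R` contains no occurrence of `k…1`
beginning in a row strictly below `b` or ending in a column strictly left of `a`. -/
theorem min_occ_restriction (k : ℕ) (hk : 2 ≤ k) (F P : Finset Cell)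
    (hF : IsFerrers F) (hP : IsPlacement F P)
    (D : Fin k → Cell) (hD : IsMinOcc F P k D)
    (a b : ℕ) (ha : a = (D ⟨k - 1, by omega⟩).1) (hb : b = (D ⟨0, by omega⟩).2) :
    ∀ S : Fin k → Cell, IsDecSeq (P ∩ Rect a b) k S →
      ¬ ((S ⟨0, by omega⟩).2 < b ∨ (S ⟨k - 1, by omega⟩).1 < a) := by
  intro S hS hbad
  obtain ⟨hDocc, hmin⟩ := hD
  obtain ⟨hDseq, a', b', hR'F, hDin⟩ := hDocc
  obtain ⟨hPF, hcolinj, hrowinj⟩ := hP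
  have hk0 : 0 < k := by omega
  have hk1 : k - 1 < k := by omega
  have ha' : a = (D ⟨k - 1, hk1⟩).1 := ha
  have hb' : b = (D ⟨0, hk0⟩).2 := hb
  have hbad' : (S ⟨0, hk0⟩).2 < b ∨ (S ⟨k - 1, hk1⟩).1 < a := hbad
  clear ha hb hbad
  -- basic facts about S
  have hSP : ∀ i, S i ∈ P := fun i => (Finset.mem_inter.1 (hS.1 i)).1
  have hSR : ∀ i, S i ∈ Rect a b := fun i => (Finset.mem_inter.1 (hS.1 i)).2
  have haa' : a ≤ a' := by
    have := hDin ⟨k - 1, hk1⟩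
    rw [mem_Rect] at this
    omega
  have hbb' : b ≤ b' := by
    have := hDin ⟨0, hk0⟩
    rw [mem_Rect] at this
    omega
  have hsub : Rect a b ⊆ Rect a' b' := Rect_mono haa' hbb'
  have hSin' : ∀ i, S i ∈ Rect a' b' := fun i => hsub (hSR i)
  have hSseqP : IsDecSeq P k S := ⟨hSP, hS.2⟩
  have hSocc : IsDecOcc F P k S := ⟨hSseqP, a', b', hR'F, hSin'⟩
  -- case 1 argument, reused
  have case1 : (S ⟨0, hk0⟩).2 < b → False := by
    intro h0
    refine not_smaller hmin hSocc (i := ⟨0, hk0⟩) (by omega) ?_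
    intro j hj
    exact absurd (show j.1 < 0 from hj) (by omega)
  rcases hbad' with h1 | h2
  · exact case1 h1
  -- case 2 : (S ⟨k-1,_⟩).1 < a
  by_cases h0 : (S ⟨0, hk0⟩).2 < b
  · exact case1 h0
  have hS0b : (S ⟨0, hk0⟩).2 = b := by
    have := hSR ⟨0, hk0⟩
    rw [mem_Rect] at this
    omega
  have hS0D0 : S ⟨0, hk0⟩ = D ⟨0, hk0⟩ :=
    hrowinj _ (hSP _) _ (hDseq.1 _) (by omega)
  rcases lt_trichotomy (S ⟨k - 1, hk1⟩).2 (D ⟨k - 1, hk1⟩).2 with hβ | heq | hα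
  · -- the bottom of S is strictly below the bottom of D
    have hk2 : k - 2 + 1 < k := by omega
    have hA : ∃ t : ℕ, ∃ h : t + 1 < k, (S ⟨t + 1, h⟩).2 < (D ⟨t + 1, h⟩).2 := by
      refine ⟨k - 2, hk2, ?_⟩
      have e : (⟨k - 2 + 1, hk2⟩ : Fin k) = ⟨k - 1, hk1⟩ :=
        Fin.ext (show k - 2 + 1 = k - 1 by omega)
      rw [e]; exact hβ
    by_cases hex : ∃ t : Fin k, ∃ h : t.1 + 1 < k,
        (S ⟨t.1 + 1, h⟩).2 < (D ⟨t.1 + 1, h⟩).2 ∧ (D t).1 < (S ⟨t.1 + 1, h⟩).1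
    · -- hybrid W = (D_0,…,D_t, S_{t+1},…,S_{k-1})
      obtain ⟨t, ht1, hrowlt, hcollt⟩ := hex
      set W : Fin k → Cell := fun p => if p.1 ≤ t.1 then D p else S p with hW
      have hWpos : ∀ i : Fin k, i.1 ≤ t.1 → W i = D i := by
        intro i h; rw [hW]; exact if_pos h
      have hWneg : ∀ i : Fin k, ¬ i.1 ≤ t.1 → W i = S i := by
        intro i h; rw [hW]; exact if_neg h
      have hWseq : IsDecSeq P k W := by
        constructor
        · intro i
          by_cases h : i.1 ≤ t.1
          · rw [hWpos i h]; exact hDseq.1 i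
          · rw [hWneg i h]; exact hSP i
        · intro i j hij
          have hij' : i.1 < j.1 := hij
          by_cases hjt : j.1 ≤ t.1
          · rw [hWpos i (by omega), hWpos j hjt]; exact hDseq.2 i j hij
          · by_cases hit : i.1 ≤ t.1
            · rw [hWpos i hit, hWneg j hjt]
              have hle1 : i ≤ t := hit
              have hc1 : (D i).1 ≤ (D t).1 := decseq_col_mono hDseq hle1
              have hle2 : (⟨t.1 + 1, ht1⟩ : Fin k) ≤ j := show t.1 + 1 ≤ j.1 by omega
              have hc2 : (S ⟨t.1 + 1, ht1⟩).1 ≤ (S j).1 := decseq_col_mono hSseqP hle2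
              have hr1 : (S j).2 ≤ (S ⟨t.1 + 1, ht1⟩).2 := decseq_row_anti hSseqP hle2
              have hlt3 : i < (⟨t.1 + 1, ht1⟩ : Fin k) := show i.1 < t.1 + 1 by omega
              have hr2 : (D ⟨t.1 + 1, ht1⟩).2 < (D i).2 := (hDseq.2 i _ hlt3).2
              exact ⟨by omega, by omega⟩
            · rw [hWneg i hit, hWneg j hjt]; exact hS.2 i j hij
      have hWocc : IsDecOcc F P k W := by
        refine ⟨hWseq, a', b', hR'F, fun i => ?_⟩
        by_cases h : i.1 ≤ t.1
        · rw [hWpos i h]; exact hDin i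
        · rw [hWneg i h]; exact hSin' i
      refine not_smaller hmin hWocc (i := ⟨t.1 + 1, ht1⟩) ?_ ?_
      · have hcnd : ¬ ((⟨t.1 + 1, ht1⟩ : Fin k).1 ≤ t.1) := show ¬ (t.1 + 1 ≤ t.1) by omega
        rw [hWneg _ hcnd]; exact hrowlt
      · intro j hj
        have hj' : j.1 ≤ t.1 := by
          have := show j.1 < t.1 + 1 from hj; omega
        rw [hWpos j hj']
    · -- no such t : use the minimal element t₀ of A
      push_neg at hex
      obtain ⟨t₀, ht0spec, ht0min⟩ :
          ∃ n : ℕ, (∃ h : n + 1 < k, (S ⟨n + 1, h⟩).2 < (D ⟨n + 1, h⟩).2) ∧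
            ∀ m, m < n → ¬ ∃ h : m + 1 < k, (S ⟨m + 1, h⟩).2 < (D ⟨m + 1, h⟩).2 :=
        ⟨Nat.find hA, Nat.find_spec hA, fun m hm => Nat.find_min hA hm⟩
      obtain ⟨ht0k, ht0row⟩ := ht0spec
      have ht0lt : t₀ < k := by omega
      have ht0pos : 1 ≤ t₀ := by
        by_contra hc
        have h00 : t₀ = 0 := by omega
        subst h00
        have hh := hex ⟨0, hk0⟩ ht0k ht0row
        have hk01 : (0 : ℕ) + 1 < k := ht0k
        have hlt : (⟨0, hk0⟩ : Fin k) < ⟨0 + 1, hk01⟩ := show (0:ℕ) < 0 + 1 by omega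
        have hcol := (hS.2 ⟨0, hk0⟩ ⟨0 + 1, hk01⟩ hlt).1
        rw [hS0D0] at hcol
        have hh' : (S ⟨0 + 1, hk01⟩).1 ≤ (D ⟨0, hk0⟩).1 := hh
        omega
      -- minimality of t₀ : row(D t₀) ≤ row(S t₀)
      have hprev := ht0min (t₀ - 1) (by omega)
      push_neg at hprev
      have hprevk : t₀ - 1 + 1 < k := by omega
      have e2 : (⟨t₀ - 1 + 1, hprevk⟩ : Fin k) = ⟨t₀, ht0lt⟩ :=
        Fin.ext (show t₀ - 1 + 1 = t₀ by omega)
      have hge : (D ⟨t₀, ht0lt⟩).2 ≤ (S ⟨t₀, ht0lt⟩).2 := by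
        have := hprev hprevk
        rw [e2] at this
        omega
      have hcolle : (S ⟨t₀ + 1, ht0k⟩).1 ≤ (D ⟨t₀, ht0lt⟩).1 :=
        hex ⟨t₀, ht0lt⟩ ht0k ht0row
      have hltt : (⟨t₀, ht0lt⟩ : Fin k) < ⟨t₀ + 1, ht0k⟩ := show t₀ < t₀ + 1 by omega
      have hcollt : (S ⟨t₀, ht0lt⟩).1 < (D ⟨t₀, ht0lt⟩).1 :=
        lt_of_lt_of_le (hS.2 ⟨t₀, ht0lt⟩ ⟨t₀ + 1, ht0k⟩ hltt).1 hcolle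
      have hrowlt : (D ⟨t₀, ht0lt⟩).2 < (S ⟨t₀, ht0lt⟩).2 := by
        rcases eq_or_lt_of_le hge with h' | h'
        · have hcell := hrowinj _ (hDseq.1 ⟨t₀, ht0lt⟩) _ (hSP ⟨t₀, ht0lt⟩) h'
          have hcc : (D ⟨t₀, ht0lt⟩).1 = (S ⟨t₀, ht0lt⟩).1 := congrArg Prod.fst hcell
          omega
        · exact h'
      -- hybrid M = (S_1,…,S_{t₀}, D_{t₀},…,D_{k-1})
      have hstep : ∀ m : ℕ, m < t₀ → m + 1 < k := fun m h => by omega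
      set M : Fin k → Cell :=
        fun p => if h : p.1 < t₀ then S ⟨p.1 + 1, hstep p.1 h⟩ else D p with hM
      have hMpos : ∀ (i : Fin k) (h : i.1 < t₀), M i = S ⟨i.1 + 1, hstep i.1 h⟩ := by
        intro i h; rw [hM]; exact dif_pos h
      have hMneg : ∀ i : Fin k, ¬ i.1 < t₀ → M i = D i := by
        intro i h; rw [hM]; exact dif_neg h
      have hMseq : IsDecSeq P k M := by
        constructor
        · intro i
          by_cases h : i.1 < t₀
          · rw [hMpos i h]; exact hSP _
          · rw [hMneg i h]; exact hDseq.1 i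
        · intro i j hij
          have hij' : i.1 < j.1 := hij
          by_cases hjt : j.1 < t₀
          · have hit : i.1 < t₀ := by omega
            rw [hMpos i hit, hMpos j hjt]
            have hlt : (⟨i.1 + 1, hstep i.1 hit⟩ : Fin k) < ⟨j.1 + 1, hstep j.1 hjt⟩ :=
              show i.1 + 1 < j.1 + 1 by omega
            exact hS.2 _ _ hlt
          · by_cases hit : i.1 < t₀
            · rw [hMpos i hit, hMneg j hjt]
              have hle1 : (⟨i.1 + 1, hstep i.1 hit⟩ : Fin k) ≤ ⟨t₀, ht0lt⟩ :=
                show i.1 + 1 ≤ t₀ by omega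
              have hle2 : (⟨t₀, ht0lt⟩ : Fin k) ≤ j := show t₀ ≤ j.1 by omega
              have hc1 := decseq_col_mono hSseqP hle1
              have hc2 := decseq_col_mono hDseq hle2
              have hr1 := decseq_row_anti hDseq hle2
              have hr2 := decseq_row_anti hSseqP hle1
              exact ⟨by omega, by omega⟩
            · rw [hMneg i hit, hMneg j hjt]; exact hDseq.2 i j hij
      have hMocc : IsDecOcc F P k M := by
        refine ⟨hMseq, a', b', hR'F, fun i => ?_⟩
        by_cases h : i.1 < t₀
        · rw [hMpos i h]; exact hSin' _
        · rw [hMneg i h]; exact hDin i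
      have h0t : (⟨0, hk0⟩ : Fin k).1 < t₀ := ht0pos
      refine not_smaller hmin hMocc (i := ⟨0, hk0⟩) ?_ ?_
      · rw [hMpos ⟨0, hk0⟩ h0t]
        have hlt : (⟨0, hk0⟩ : Fin k) < ⟨(⟨0, hk0⟩ : Fin k).1 + 1, hstep _ h0t⟩ :=
          show (0:ℕ) < 0 + 1 by omega
        have := (hS.2 _ _ hlt).2
        omega
      · intro j hj
        exact absurd (show j.1 < 0 from hj) (by omega)
  · -- rows equal at the end ⇒ same cell ⇒ column = a, contradiction
    have hcell := hrowinj _ (hSP ⟨k - 1, hk1⟩) _ (hDseq.1 ⟨k - 1, hk1⟩) heq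
    have hcc : (S ⟨k - 1, hk1⟩).1 = (D ⟨k - 1, hk1⟩).1 := congrArg Prod.fst hcell
    omega
  · -- row(D_{k-1}) < row(S_{k-1}) : hybrid T = (S_1,…,S_{k-1}, D_{k-1})
    set T : Fin k → Cell :=
      fun p => if h : p.1 + 1 < k then S ⟨p.1 + 1, h⟩ else D ⟨k - 1, hk1⟩ with hT
    have hTpos : ∀ (i : Fin k) (h : i.1 + 1 < k), T i = S ⟨i.1 + 1, h⟩ := by
      intro i h; rw [hT]; exact dif_pos h
    have hTneg : ∀ i : Fin k, ¬ i.1 + 1 < k → T i = D ⟨k - 1, hk1⟩ := by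
      intro i h; rw [hT]; exact dif_neg h
    have hTseq : IsDecSeq P k T := by
      constructor
      · intro i
        by_cases h : i.1 + 1 < k
        · rw [hTpos i h]; exact hSP _
        · rw [hTneg i h]; exact hDseq.1 _
      · intro i j hij
        have hij' : i.1 < j.1 := hij
        have hi : i.1 + 1 < k := by omega
        by_cases hj : j.1 + 1 < k
        · rw [hTpos i hi, hTpos j hj]
          have hlt : (⟨i.1 + 1, hi⟩ : Fin k) < ⟨j.1 + 1, hj⟩ :=
            show i.1 + 1 < j.1 + 1 by omega
          exact hS.2 _ _ hlt
        · rw [hTpos i hi, hTneg j hj]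
          have hle : (⟨i.1 + 1, hi⟩ : Fin k) ≤ ⟨k - 1, hk1⟩ :=
            show i.1 + 1 ≤ k - 1 by omega
          have hc1 := decseq_col_mono hSseqP hle
          have hr1 := decseq_row_anti hSseqP hle
          exact ⟨by omega, by omega⟩
    have hTocc : IsDecOcc F P k T := by
      refine ⟨hTseq, a', b', hR'F, fun i => ?_⟩
      by_cases h : i.1 + 1 < k
      · rw [hTpos i h]; exact hSin' _
      · rw [hTneg i h]; exact hDin _
    have hk01 : (⟨0, hk0⟩ : Fin k).1 + 1 < k := by
      have : (0:ℕ) + 1 < k := by omega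
      exact this
    refine not_smaller hmin hTocc (i := ⟨0, hk0⟩) ?_ ?_
    · rw [hTpos ⟨0, hk0⟩ hk01]
      have hlt : (⟨0, hk0⟩ : Fin k) < ⟨(⟨0, hk0⟩ : Fin k).1 + 1, hk01⟩ :=
        show (0:ℕ) < 0 + 1 by omega
      have := (hS.2 _ _ hlt).2
      omega
    · intro j hj
      exact absurd (show j.1 < 0 from hj) (by omega)
end

section
/- Theorem: Let P be a rook placement on a rectangular Ferrers board. Then ins(pivR(P)) = (ins(P))⁻ and rec(pivR(P)) = (rec(P))⁻, where Y⁻ denotes the standard Young tableau Y with its top row removed. -/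
open scoped Classical

/-- The condition for a left pivot in row `r`, column `c`, given the placement `P` and
the set `prev` of pivots already placed (in rows below `r`): the element of `P` in row
`r` has `c` strictly to its left, column `c` contains an element of `P` below row `r`,
and column `c` contains no pivot yet. -/
def pivCondL (P prev : Finset Cell) (r c : ℕ) : Prop :=
  (∃ x ∈ P, x.2 = r ∧ c < x.1) ∧ (∃ y ∈ P, y.1 = c ∧ y.2 < r) ∧ ∀ v ∈ prev, v.1 ≠ c

/-- The condition for a right pivot in row `r`, column `c`. -/
def pivCondR (P prev : Finset Cell) (r c : ℕ) : Prop :=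
  (∃ x ∈ P, x.2 = r ∧ x.1 < c) ∧ (∃ y ∈ P, y.1 = c ∧ y.2 < r) ∧ ∀ v ∈ prev, v.1 ≠ c

/-- The left pivots among rows `1,…,r`, built row by row from the bottom: no pivot in
the bottom row; in row `r ≥ 2`, if an admissible column exists, the pivot goes in the
rightmost one. -/
noncomputable def pivLAux (P : Finset Cell) : ℕ → Finset Cell
  | 0 => ∅
  | r + 1 =>
    let prev := pivLAux P r
    if r = 0 then prev
    else if ∃ c, pivCondL P prev (r + 1) c then
      insert (sSup {c | pivCondL P prev (r + 1) c}, r + 1) prev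
    else prev

/-- The right pivots among rows `1,…,r`: in row `r ≥ 2`, the pivot goes in the leftmost
admissible column. -/
noncomputable def pivRAux (P : Finset Cell) : ℕ → Finset Cell
  | 0 => ∅
  | r + 1 =>
    let prev := pivRAux P r
    if r = 0 then prev
    else if ∃ c, pivCondR P prev (r + 1) c then
      insert (sInf {c | pivCondR P prev (r + 1) c}, r + 1) prev
    else prev

/-- The left pivots `pivL(P)` of a placement `P` on a board with `n` rows. -/
noncomputable def pivL (n : ℕ) (P : Finset Cell) : Finset Cell := pivLAux P n

/-- The right pivots `pivR(P)` of a placement `P` on a board with `n` rows. -/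
noncomputable def pivR (n : ℕ) (P : Finset Cell) : Finset Cell := pivRAux P n

/-- Robinson–Schensted row insertion of a value `v` into one row: returns the new row
and the bumped value (`none` if `v` was appended at the right end). The leftmost entry
strictly larger than `v` is bumped. -/
def rowInsert (v : ℕ) : List ℕ → List ℕ × Option ℕ
  | [] => ([v], none)
  | x :: xs =>
    if v < x then (v :: xs, some x)
    else
      let p := rowInsert v xs
      (x :: p.1, p.2)

/-- Robinson–Schensted insertion of a value into a tableau (a list of rows, top row
first), bumping cascading down the rows. -/
def tabInsert (v : ℕ) : List (List ℕ) → List (List ℕ)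
  | [] => [[v]]
  | row :: rest =>
    match rowInsert v row with
    | (r, none) => r :: rest
    | (r, some b) => r :: tabInsert b rest

/-- The row of the (unique) cell of `P` in column `c`. -/
noncomputable def rowAt (P : Finset Cell) (c : ℕ) : ℕ := sSup {r | (c, r) ∈ P}

/-- The cells of the placement `P`, as (column, row) pairs listed in increasing order
of column: the two-line notation of the corresponding partial permutation. -/
noncomputable def rsSteps (P : Finset Cell) : List (ℕ × ℕ) :=
  ((P.image Prod.fst).sort (· ≤ ·)).map fun c => (c, rowAt P c)

/-- The index of the (first) row where two tableaux have different lengths. -/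
noncomputable def diffRow (T T' : List (List ℕ)) : ℕ :=
  sInf {r | (T.getD r []).length ≠ (T'.getD r []).length}

/-- Append the value `v` at the right end of row `r` of a tableau (creating a new
bottom row when `r` is one past the last row). -/
def placeAt (v : ℕ) : ℕ → List (List ℕ) → List (List ℕ)
  | 0, [] => [[v]]
  | 0, row :: rest => (row ++ [v]) :: rest
  | _ + 1, [] => [[v]]
  | r + 1, row :: rest => row :: placeAt v r rest

/-- The Robinson–Schensted insertion and recording tableaux of the partial permutation
determined by `P`, columns processed in increasing order. -/
noncomputable def rsPair (P : Finset Cell) : List (List ℕ) × List (List ℕ) :=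
  (rsSteps P).foldl
    (fun TR cv =>
      let T' := tabInsert cv.2 TR.1
      (T', placeAt cv.1 (diffRow TR.1 T') TR.2))
    ([], [])

/-- The Robinson–Schensted insertion tableau `ins(P)`. -/
noncomputable def insTab (P : Finset Cell) : List (List ℕ) := (rsPair P).1

/-- The Robinson–Schensted recording tableau `rec(P)`. -/
noncomputable def recTab (P : Finset Cell) : List (List ℕ) := (rsPair P).2

/-!
Row-inserting the cells of `P` column by column, the values bumped out of the first row,
labelled by the columns whose insertion bumped them, pass through the lower rows exactly as a
separate Robinson–Schensted run. Hence deleting the top rows of `ins(P)` and `rec(P)` leaves the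
two tableaux of this sequence of bumped pairs, and it remains to see that the bumped pairs are
the right pivots. If column `c` bumps `r`, then `r` entered the first row from a column left of
`c` and `c` carries a smaller value; and `c` bumps nothing else, so no pivot below `r` lies in
column `c`. Conversely, if column `c` is admissible for row `r`, then when `c` is inserted
either `r` has already been bumped, from a column `≤ c`, or `c` bumps a value smaller than `r`,
in which case `c` would already hold a pivot. So the bumping column of `r` is the leftmost
admissible one.
-/

section RowInsert

variable {v b x : ℕ} {row : List ℕ}

lemma rowInsert_of_snd_eq_none (h : (rowInsert v row).2 = none) :
    (rowInsert v row).1 = row ++ [v] ∧ ∀ x ∈ row, x ≤ v := by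
  induction row with
  | nil => simp [rowInsert]
  | cons y ys ih =>
    by_cases hvy : v < y
    · simp [rowInsert, hvy] at h
    · simp only [rowInsert, hvy, if_false] at h ⊢
      obtain ⟨h₁, h₂⟩ := ih h
      simpa [h₁, not_lt.1 hvy] using h₂

lemma rowInsert_of_snd_eq_some (h : (rowInsert v row).2 = some b) :
    v < b ∧ ∃ l₁ l₂, row = l₁ ++ b :: l₂ ∧ (rowInsert v row).1 = l₁ ++ v :: l₂ ∧
      ∀ x ∈ l₁, x ≤ v := by
  induction row with
  | nil => simp [rowInsert] at h
  | cons y ys ih =>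
    by_cases hvy : v < y
    · simp only [rowInsert, hvy, if_true, Option.some.injEq] at h ⊢
      subst h
      exact ⟨hvy, [], ys, by simp⟩
    · simp only [rowInsert, hvy, if_false] at h ⊢
      obtain ⟨hvb, l₁, l₂, h₁, h₂, h₃⟩ := ih h
      refine ⟨hvb, y :: l₁, l₂, by simp [h₁], by simp [h₂], ?_⟩
      simpa [not_lt.1 hvy] using h₃

lemma exists_rowInsert_snd_eq_some (hx : x ∈ row) (hvx : v < x) :
    ∃ b, (rowInsert v row).2 = some b := by
  cases h : (rowInsert v row).2 with
  | none => exact absurd ((rowInsert_of_snd_eq_none h).2 x hx) (not_le.2 hvx)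
  | some b => exact ⟨b, rfl⟩

lemma mem_rowInsert_fst_iff (hrow : row.Nodup) :
    x ∈ (rowInsert v row).1 ↔ x = v ∨ x ∈ row ∧ (rowInsert v row).2 ≠ some x := by
  cases h : (rowInsert v row).2 with
  | none => simp [(rowInsert_of_snd_eq_none h).1, or_comm]
  | some b =>
    obtain ⟨hvb, l₁, l₂, rfl, h₂, -⟩ := rowInsert_of_snd_eq_some h
    have hb : b ∉ l₁ ∧ b ∉ l₂ := by
      simp only [List.nodup_append, List.nodup_cons] at hrow
      exact ⟨fun hb => hrow.2.2 b hb b (List.mem_cons_self ..) rfl, hrow.2.1.1⟩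
    rw [h₂]
    simp only [List.mem_append, List.mem_cons, ne_eq, Option.some.injEq]
    constructor
    · rintro (hx | rfl | hx)
      · exact .inr ⟨.inl hx, fun e => hb.1 (e ▸ hx)⟩
      · exact .inl rfl
      · exact .inr ⟨.inr (.inr hx), fun e => hb.2 (e ▸ hx)⟩
    · rintro (rfl | ⟨hx | rfl | hx, hne⟩) <;> simp_all

lemma pairwise_lt_rowInsert_fst (hs : row.Pairwise (· < ·)) (hv : v ∉ row) :
    (rowInsert v row).1.Pairwise (· < ·) := by
  cases h : (rowInsert v row).2 with
  | none =>
    obtain ⟨h₁, h₂⟩ := rowInsert_of_snd_eq_none h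
    rw [h₁, List.pairwise_append]
    refine ⟨hs, by simp, fun x hx y hy => ?_⟩
    obtain rfl : y = v := by simpa using hy
    exact lt_of_le_of_ne (h₂ x hx) (fun e => hv (e ▸ hx))
  | some b =>
    obtain ⟨hvb, l₁, l₂, rfl, h₂, h₃⟩ := rowInsert_of_snd_eq_some h
    rw [h₂]
    simp only [List.pairwise_append, List.pairwise_cons, List.mem_cons] at hs ⊢
    have hlt : ∀ x ∈ l₁, x < v := fun x hx =>
      lt_of_le_of_ne (h₃ x hx) (fun e => hv (by simp [← e, hx]))
    refine ⟨hs.1, ⟨fun y hy => hvb.trans (hs.2.1.1 y hy), hs.2.1.2⟩, ?_⟩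
    rintro x hx y (rfl | hy)
    · exact hlt x hx
    · exact (hlt x hx).trans (hvb.trans (hs.2.1.1 y hy))

lemma rowInsert_bumped_le (hs : row.Pairwise (· < ·)) (h : (rowInsert v row).2 = some b)
    (hx : x ∈ row) (hvx : v < x) : b ≤ x := by
  obtain ⟨-, l₁, l₂, rfl, -, h₃⟩ := rowInsert_of_snd_eq_some h
  simp only [List.pairwise_append, List.pairwise_cons] at hs
  rcases List.mem_append.1 hx with hx | hx
  · exact absurd (h₃ x hx) (not_le.2 hvx)
  · rcases List.mem_cons.1 hx with rfl | hx
    · exact le_rfl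
    · exact (hs.2.1.1 x hx).le

end RowInsert

def bumps : List (ℕ × ℕ) → List ℕ → List (ℕ × ℕ)
  | [], _ => []
  | cv :: L, row =>
    match (rowInsert cv.2 row).2 with
    | none => bumps L (rowInsert cv.2 row).1
    | some b => (cv.1, b) :: bumps L (rowInsert cv.2 row).1

def IsInsertionInput (L : List (ℕ × ℕ)) (row : List ℕ) : Prop :=
  L.Pairwise (·.1 < ·.1) ∧ (L.map Prod.snd ++ row).Nodup ∧ row.Pairwise (· < ·)

def EntersBefore (L : List (ℕ × ℕ)) (row : List ℕ) (c b : ℕ) : Prop :=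
  b ∈ row ∨ ∃ c' < c, (c', b) ∈ L

section Bumps

variable {L : List (ℕ × ℕ)} {row : List ℕ} {c c₀ v v₀ b : ℕ}

lemma bumps_cons_of_none (h : (rowInsert v row).2 = none) :
    bumps ((c, v) :: L) row = bumps L (rowInsert v row).1 := by
  simp [bumps, h]

lemma bumps_cons_of_some (h : (rowInsert v row).2 = some b) :
    bumps ((c, v) :: L) row = (c, b) :: bumps L (rowInsert v row).1 := by
  simp [bumps, h]

lemma bumps_subset_cons : bumps L (rowInsert v row).1 ⊆ bumps ((c, v) :: L) row := by
  cases h : (rowInsert v row).2 with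
  | none => rw [bumps_cons_of_none h]; exact List.Subset.refl _
  | some b => rw [bumps_cons_of_some h]; exact List.subset_cons_self _ _

lemma exists_lt_of_mem_bumps (hb : (c, b) ∈ bumps L row) : ∃ v, (c, v) ∈ L ∧ v < b := by
  induction L generalizing row with
  | nil => simp [bumps] at hb
  | cons cv L ih =>
    obtain ⟨c₀, v₀⟩ := cv
    have hL : ∀ {row}, (c, b) ∈ bumps L row → ∃ v, (c, v) ∈ (c₀, v₀) :: L ∧ v < b :=
      fun hb => (ih hb).imp fun _ ⟨hv, hvb⟩ => ⟨List.mem_cons_of_mem _ hv, hvb⟩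
    cases h : (rowInsert v₀ row).2 with
    | none => exact hL (by rwa [bumps_cons_of_none h] at hb)
    | some b₀ =>
      rw [bumps_cons_of_some h, List.mem_cons, Prod.mk.injEq] at hb
      rcases hb with ⟨rfl, rfl⟩ | hb
      · exact ⟨v₀, List.mem_cons_self, (rowInsert_of_snd_eq_some h).1⟩
      · exact hL hb

lemma bumps_pairwise_fst (hL : L.Pairwise (·.1 < ·.1)) :
    (bumps L row).Pairwise (·.1 < ·.1) := by
  induction L generalizing row with
  | nil => simp [bumps]
  | cons cv L ih =>
    obtain ⟨c₀, v₀⟩ := cv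
    obtain ⟨hhead, htail⟩ := List.pairwise_cons.1 hL
    cases h : (rowInsert v₀ row).2 with
    | none => rw [bumps_cons_of_none h]; exact ih htail
    | some b₀ =>
      rw [bumps_cons_of_some h]
      refine List.pairwise_cons.2 ⟨fun q hq => ?_, ih htail⟩
      obtain ⟨v, hv, -⟩ := exists_lt_of_mem_bumps (show (q.1, q.2) ∈ _ from hq)
      exact hhead (q.1, v) hv

lemma bumps_nodup_fst (hL : L.Pairwise (·.1 < ·.1)) : ((bumps L row).map Prod.fst).Nodup :=
  (List.pairwise_map.2 (bumps_pairwise_fst hL)).nodup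

lemma IsInsertionInput.tail (hI : IsInsertionInput ((c, v) :: L) row) :
    IsInsertionInput L (rowInsert v row).1 := by
  obtain ⟨hL, hnd, hs⟩ := hI
  simp only [List.map_cons, List.cons_append, List.nodup_cons, List.mem_append,
    not_or, List.nodup_append] at hnd
  obtain ⟨⟨hvL, hvrow⟩, hndL, -, hdisj⟩ := hnd
  have hs' := pairwise_lt_rowInsert_fst hs hvrow
  refine ⟨(List.pairwise_cons.1 hL).2, List.nodup_append.2 ⟨hndL, hs'.nodup, ?_⟩, hs'⟩
  rintro x hxL _ hx rfl
  rcases (mem_rowInsert_fst_iff hs.nodup).1 hx with rfl | ⟨hx, -⟩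
  · exact hvL hxL
  · exact hdisj x hxL x hx rfl

lemma EntersBefore.of_rowInsert (h : EntersBefore L (rowInsert v₀ row).1 c b)
    (hrow : row.Nodup) (hc : c₀ < c) : EntersBefore ((c₀, v₀) :: L) row c b := by
  rcases h with hb | ⟨c', hc', hb⟩
  · rcases (mem_rowInsert_fst_iff hrow).1 hb with rfl | ⟨hb, -⟩
    · exact .inr ⟨c₀, hc, List.mem_cons_self⟩
    · exact .inl hb
  · exact .inr ⟨c', hc', List.mem_cons_of_mem _ hb⟩

lemma EntersBefore.rowInsert_or_bumped (h : EntersBefore ((c₀, v₀) :: L) row c b)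
    (hrow : row.Nodup) :
    EntersBefore L (rowInsert v₀ row).1 c b ∨ (rowInsert v₀ row).2 = some b := by
  rcases h with hb | ⟨c', hc', hb⟩
  · by_cases hbump : (rowInsert v₀ row).2 = some b
    · exact .inr hbump
    · exact .inl (.inl ((mem_rowInsert_fst_iff hrow).2 (.inr ⟨hb, hbump⟩)))
  · rcases List.mem_cons.1 hb with hb | hb
    · cases hb
      exact .inl (.inl ((mem_rowInsert_fst_iff hrow).2 (.inl rfl)))
    · exact .inl (.inr ⟨c', hc', hb⟩)

lemma entersBefore_of_mem_bumps (hI : IsInsertionInput L row) (hb : (c, b) ∈ bumps L row) :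
    EntersBefore L row c b := by
  induction L generalizing row with
  | nil => simp [bumps] at hb
  | cons cv L ih =>
    obtain ⟨c₀, v₀⟩ := cv
    have htail (hb : (c, b) ∈ bumps L (rowInsert v₀ row).1) :
        EntersBefore ((c₀, v₀) :: L) row c b := by
      obtain ⟨v, hv, -⟩ := exists_lt_of_mem_bumps hb
      exact (ih hI.tail hb).of_rowInsert hI.2.2.nodup ((List.pairwise_cons.1 hI.1).1 _ hv)
    cases h : (rowInsert v₀ row).2 with
    | none => exact htail (by rwa [bumps_cons_of_none h] at hb)
    | some b₀ =>
      rw [bumps_cons_of_some h, List.mem_cons, Prod.mk.injEq] at hb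
      rcases hb with ⟨rfl, rfl⟩ | hb
      · obtain ⟨-, l₁, l₂, rfl, -⟩ := rowInsert_of_snd_eq_some h
        exact .inl (by simp)
      · exact htail hb

lemma bumps_nodup_snd (hI : IsInsertionInput L row) : ((bumps L row).map Prod.snd).Nodup := by
  induction L generalizing row with
  | nil => simp [bumps]
  | cons cv L ih =>
    obtain ⟨c₀, v₀⟩ := cv
    cases h : (rowInsert v₀ row).2 with
    | none => rw [bumps_cons_of_none h]; exact ih hI.tail
    | some b₀ =>
      rw [bumps_cons_of_some h, List.map_cons, List.nodup_cons]
      refine ⟨fun hb₀ => ?_, ih hI.tail⟩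
      obtain ⟨⟨c, b⟩, hcb, rfl : b = b₀⟩ := List.mem_map.1 hb₀
      obtain ⟨hvb, l₁, l₂, hrow, -⟩ := rowInsert_of_snd_eq_some h
      have hb₀ : b ∈ row := by simp [hrow]
      rcases entersBefore_of_mem_bumps hI.tail hcb with hb | ⟨c', -, hb⟩
      · rcases (mem_rowInsert_fst_iff hI.2.2.nodup).1 hb with rfl | ⟨-, hne⟩
        · exact lt_irrefl _ hvb
        · exact hne h
      · refine List.disjoint_of_nodup_append hI.2.1 ?_ hb₀
        exact List.mem_cons_of_mem _ (List.mem_map_of_mem (f := Prod.snd) hb)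

-- Inserting `v` at column `c` bumps the least entry above `v`: `b` itself, unless `b` has
-- already been bumped by then.
lemma EntersBefore.bumped_or_bumps_lt (hI : IsInsertionInput L row) (hcv : (c, v) ∈ L)
    (hvb : v < b) (h : EntersBefore L row c b) :
    (∃ c' ≤ c, (c', b) ∈ bumps L row) ∨ ∃ b' < b, (c, b') ∈ bumps L row := by
  induction L generalizing row with
  | nil => simp at hcv
  | cons cv L ih =>
    obtain ⟨c₀, v₀⟩ := cv
    obtain ⟨hhead, -⟩ := List.pairwise_cons.1 hI.1
    rcases List.mem_cons.1 hcv with heq | hcv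
    · obtain ⟨rfl, rfl⟩ := Prod.mk.inj heq
      have hb : b ∈ row := h.resolve_right fun ⟨c', hc', hb⟩ => by
        rcases List.mem_cons.1 hb with heq | hb
        · exact hc'.ne (Prod.mk.inj heq).1
        · exact (hhead _ hb).not_gt hc'
      obtain ⟨b₀, hb₀⟩ := exists_rowInsert_snd_eq_some hb hvb
      rw [bumps_cons_of_some hb₀]
      rcases (rowInsert_bumped_le hI.2.2 hb₀ hb hvb).eq_or_lt with rfl | hlt
      · exact .inl ⟨c, le_rfl, List.mem_cons_self⟩
      · exact .inr ⟨b₀, hlt, List.mem_cons_self⟩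
    · rcases h.rowInsert_or_bumped hI.2.2.nodup with h | hbump
      · exact (ih hI.tail hcv h).imp (fun ⟨c', hc', hm⟩ => ⟨c', hc', bumps_subset_cons hm⟩)
          (fun ⟨b', hb', hm⟩ => ⟨b', hb', bumps_subset_cons hm⟩)
      · rw [bumps_cons_of_some hbump]
        exact .inl ⟨c₀, (hhead _ hcv).le, List.mem_cons_self⟩

end Bumps

section Tableau

variable {v b c : ℕ} {row : List ℕ} {T R : List (List ℕ)}

lemma tabInsert_cons_of_none (h : (rowInsert v row).2 = none) :
    tabInsert v (row :: T) = (rowInsert v row).1 :: T := by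
  simp only [tabInsert]
  rcases hr : rowInsert v row with ⟨r, o⟩
  simp_all

lemma tabInsert_cons_of_some (h : (rowInsert v row).2 = some b) :
    tabInsert v (row :: T) = (rowInsert v row).1 :: tabInsert b T := by
  simp only [tabInsert]
  rcases hr : rowInsert v row with ⟨r, o⟩
  simp_all

lemma headD_tabInsert : (tabInsert v T).headD [] = (rowInsert v (T.headD [])).1 := by
  cases T with
  | nil => rfl
  | cons row T =>
    cases h : (rowInsert v row).2 with
    | none => simp [tabInsert_cons_of_none h]
    | some b => simp [tabInsert_cons_of_some h]

lemma exists_length_getD_ne_tabInsert (v : ℕ) (T : List (List ℕ)) :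
    ∃ r, (T.getD r []).length ≠ ((tabInsert v T).getD r []).length := by
  induction T generalizing v with
  | nil => exact ⟨0, by simp [tabInsert]⟩
  | cons row T ih =>
    cases h : (rowInsert v row).2 with
    | none => exact ⟨0, by simp [tabInsert_cons_of_none h, (rowInsert_of_snd_eq_none h).1]⟩
    | some b =>
      obtain ⟨r, hr⟩ := ih b
      exact ⟨r + 1, by simpa [tabInsert_cons_of_some h] using hr⟩

lemma diffRow_cons_of_length_eq {a a' : List ℕ} {T T' : List (List ℕ)}
    (ha : a.length = a'.length) (hT : ∃ r, (T.getD r []).length ≠ (T'.getD r []).length) :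
    diffRow (a :: T) (a' :: T') = diffRow T T' + 1 := by
  unfold diffRow
  refine (Nat.sInf_add
    (p := fun r => ((a :: T).getD r []).length ≠ ((a' :: T').getD r []).length)
    (Nat.one_le_iff_ne_zero.2 fun h0 => ?_)).symm
  rcases Nat.sInf_eq_zero.1 h0 with h0 | h0
  · exact h0 (by simpa using ha)
  · obtain ⟨r, hr⟩ := hT
    exact (Set.eq_empty_iff_forall_notMem.1 h0) (r + 1) (by simpa using hr)

lemma diffRow_tabInsert_of_none (h : (rowInsert v (T.headD [])).2 = none) :
    diffRow T (tabInsert v T) = 0 := by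
  refine Nat.sInf_eq_zero.2 (.inl ?_)
  cases T with
  | nil => simp [tabInsert]
  | cons row T =>
    have h : (rowInsert v row).2 = none := h
    simp [tabInsert_cons_of_none h, (rowInsert_of_snd_eq_none h).1]

lemma diffRow_tabInsert_of_some (h : (rowInsert v row).2 = some b) :
    diffRow (row :: T) (tabInsert v (row :: T)) = diffRow T (tabInsert b T) + 1 := by
  rw [tabInsert_cons_of_some h]
  refine diffRow_cons_of_length_eq ?_ (exists_length_getD_ne_tabInsert b T)
  obtain ⟨-, l₁, l₂, rfl, h₂, -⟩ := rowInsert_of_snd_eq_some h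
  simp [h₂]

lemma length_placeAt (c d : ℕ) (R : List (List ℕ)) (hd : d ≤ R.length) :
    (placeAt c d R).length = max R.length (d + 1) := by
  induction R generalizing d with
  | nil =>
    obtain rfl : d = 0 := by simpa using hd
    simp [placeAt]
  | cons r R ih =>
    cases d with
    | zero => simp [placeAt]
    | succ d => simp [placeAt, ih d (by simpa using hd)]

lemma length_tabInsert_eq_length_placeAt (c v : ℕ) (hlen : T.length = R.length) :
    (tabInsert v T).length = (placeAt c (diffRow T (tabInsert v T)) R).length := by
  induction T generalizing v R with
  | nil =>
    obtain rfl := List.length_eq_zero_iff.1 hlen.symm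
    rw [diffRow_tabInsert_of_none (T := []) rfl]
    simp [tabInsert, placeAt]
  | cons row T ih =>
    obtain ⟨r, R, rfl⟩ := List.exists_cons_of_length_eq_add_one hlen.symm
    cases h : (rowInsert v row).2 with
    | none =>
      rw [diffRow_tabInsert_of_none h, tabInsert_cons_of_none h]
      simpa [placeAt] using hlen
    | some b =>
      rw [diffRow_tabInsert_of_some h, tabInsert_cons_of_some h]
      simpa [placeAt] using ih b (by simpa using hlen)

end Tableau

noncomputable def rsStep (TR : List (List ℕ) × List (List ℕ)) (cv : ℕ × ℕ) :
    List (List ℕ) × List (List ℕ) :=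
  (tabInsert cv.2 TR.1, placeAt cv.1 (diffRow TR.1 (tabInsert cv.2 TR.1)) TR.2)

lemma rsPair_eq_foldl (P : Finset Cell) : rsPair P = (rsSteps P).foldl rsStep ([], []) := rfl

section RSStep

variable {v b c : ℕ} {TR : List (List ℕ) × List (List ℕ)}

lemma rsStep_length (cv : ℕ × ℕ) (hlen : TR.1.length = TR.2.length) :
    (rsStep TR cv).1.length = (rsStep TR cv).2.length :=
  length_tabInsert_eq_length_placeAt cv.1 cv.2 hlen

lemma rsStep_tail_of_none (h : (rowInsert v (TR.1.headD [])).2 = none) :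
    Prod.map List.tail List.tail (rsStep TR (c, v)) = Prod.map List.tail List.tail TR := by
  obtain ⟨T, R⟩ := TR
  simp only [rsStep, Prod.map_apply, diffRow_tabInsert_of_none h, Prod.mk.injEq]
  constructor
  · cases T with
    | nil => rfl
    | cons row T =>
      have h : (rowInsert v row).2 = none := h
      rw [tabInsert_cons_of_none h]; rfl
  · cases R <;> rfl

lemma rsStep_tail_of_some (hlen : TR.1.length = TR.2.length)
    (h : (rowInsert v (TR.1.headD [])).2 = some b) :
    Prod.map List.tail List.tail (rsStep TR (c, v)) =
      rsStep (Prod.map List.tail List.tail TR) (c, b) := by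
  obtain ⟨T, R⟩ := TR
  obtain ⟨row, T, rfl⟩ : ∃ row T', T = row :: T' := by
    cases T with
    | nil => simp [rowInsert] at h
    | cons row T => exact ⟨row, T, rfl⟩
  obtain ⟨r, R, rfl⟩ := List.exists_cons_of_length_eq_add_one hlen.symm
  have h : (rowInsert v row).2 = some b := h
  simp only [rsStep, Prod.map_apply]
  rw [diffRow_tabInsert_of_some h, tabInsert_cons_of_some h]
  rfl

lemma foldl_rsStep_tail (L : List (ℕ × ℕ)) (hlen : TR.1.length = TR.2.length) :
    Prod.map List.tail List.tail (L.foldl rsStep TR) =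
      (bumps L (TR.1.headD [])).foldl rsStep (Prod.map List.tail List.tail TR) := by
  induction L generalizing TR with
  | nil => rfl
  | cons cv L ih =>
    obtain ⟨c, v⟩ := cv
    have ih := ih (rsStep_length (c, v) hlen)
    rw [show (rsStep TR (c, v)).1 = tabInsert v TR.1 from rfl, headD_tabInsert] at ih
    rw [List.foldl_cons, ih]
    cases h : (rowInsert v (TR.1.headD [])).2 with
    | none => rw [bumps_cons_of_none h, rsStep_tail_of_none h]
    | some b => rw [bumps_cons_of_some h, List.foldl_cons, rsStep_tail_of_some hlen h]

end RSStep

section RSSteps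

variable {P : Finset Cell}

lemma rowAt_eq (hcol : Set.InjOn Prod.fst (P : Set Cell)) {c r : ℕ} (h : (c, r) ∈ P) :
    rowAt P c = r := by
  have hs : {r' | (c, r') ∈ P} = {r} :=
    Set.eq_singleton_iff_unique_mem.2 ⟨h, fun r' h' => congrArg Prod.snd (hcol h' h rfl)⟩
  rw [rowAt, hs, csSup_singleton]

lemma mem_rsSteps_iff (hcol : Set.InjOn Prod.fst (P : Set Cell)) {p : ℕ × ℕ} :
    p ∈ rsSteps P ↔ p ∈ P := by
  simp only [rsSteps, List.mem_map, Finset.mem_sort, Finset.mem_image]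
  constructor
  · rintro ⟨c, ⟨q, hq, rfl⟩, rfl⟩
    rwa [rowAt_eq hcol hq]
  · intro hp
    exact ⟨p.1, ⟨p, hp, rfl⟩, by rw [rowAt_eq hcol hp]⟩

lemma rsSteps_pairwise_fst (P : Finset Cell) : (rsSteps P).Pairwise (·.1 < ·.1) :=
  List.pairwise_map.2 (Finset.sortedLT_sort _).pairwise

lemma isInsertionInput_rsSteps (hcol : Set.InjOn Prod.fst (P : Set Cell))
    (hrow : Set.InjOn Prod.snd (P : Set Cell)) : IsInsertionInput (rsSteps P) [] := by
  refine ⟨rsSteps_pairwise_fst P, ?_, List.Pairwise.nil⟩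
  rw [List.append_nil]
  refine List.Nodup.map_on (fun p hp q hq => hrow ((mem_rsSteps_iff hcol).1 hp)
    ((mem_rsSteps_iff hcol).1 hq)) ?_
  exact (rsSteps_pairwise_fst P).imp (fun h e => h.ne (congrArg Prod.fst e))

lemma rsSteps_toFinset {M : List (ℕ × ℕ)} (hM : M.Pairwise (·.1 < ·.1)) :
    rsSteps M.toFinset = M := by
  have hfst : (M.map Prod.fst).Pairwise (· < ·) := List.pairwise_map.2 hM
  have hcol : Set.InjOn Prod.fst (M.toFinset : Set Cell) := fun p hp q hq =>
    List.inj_on_of_nodup_map hfst.nodup (List.mem_toFinset.1 hp) (List.mem_toFinset.1 hq)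
  have himg : M.toFinset.image Prod.fst = (M.map Prod.fst).toFinset := by
    ext; simp
  rw [rsSteps, himg, (List.toFinset_sort _ hfst.nodup).2 (hfst.imp le_of_lt), List.map_map]
  conv_rhs => rw [← List.map_id M]
  refine List.map_congr_left fun p hp => ?_
  simp [rowAt_eq hcol (show (p.1, p.2) ∈ M.toFinset by simpa using hp)]

end RSSteps

section Pivots

variable {P B : Finset Cell} {r c : ℕ}

lemma filter_snd_le_succ_of_mem (hrow : Set.InjOn Prod.snd (B : Set Cell))
    (hc : (c, r + 1) ∈ B) :
    B.filter (·.2 ≤ r + 1) = insert (c, r + 1) (B.filter (·.2 ≤ r)) := by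
  ext ⟨c', r'⟩
  simp only [Finset.mem_insert, Finset.mem_filter, Prod.mk.injEq]
  constructor
  · rintro ⟨h, hr'⟩
    rcases hr'.lt_or_eq with hr' | rfl
    · exact .inr ⟨h, Nat.le_of_lt_succ hr'⟩
    · exact .inl ⟨congrArg Prod.fst (hrow h hc rfl), rfl⟩
  · rintro (⟨rfl, rfl⟩ | ⟨h, hr'⟩)
    · exact ⟨hc, le_rfl⟩
    · exact ⟨h, hr'.trans r.le_succ⟩

lemma filter_snd_le_succ_of_notMem (hB : ∀ c, (c, r + 1) ∉ B) :
    B.filter (·.2 ≤ r + 1) = B.filter (·.2 ≤ r) := by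
  ext ⟨c', r'⟩
  simp only [Finset.mem_filter]
  refine ⟨fun ⟨h, hr'⟩ => ⟨h, ?_⟩, fun ⟨h, hr'⟩ => ⟨h, hr'.trans r.le_succ⟩⟩
  rcases hr'.lt_or_eq with hr' | rfl
  · exact Nat.le_of_lt_succ hr'
  · exact absurd h (hB c')

lemma pivRAux_eq_filter (hB : ∀ p ∈ B, 2 ≤ p.2) (hrow : Set.InjOn Prod.snd (B : Set Cell))
    (hcond : ∀ r c, (c, r + 1) ∈ B → pivCondR P (B.filter (·.2 ≤ r)) (r + 1) c)
    (hleft : ∀ r c, pivCondR P (B.filter (·.2 ≤ r)) (r + 1) c →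
      ∃ c' ≤ c, (c', r + 1) ∈ B) :
    ∀ r, pivRAux P r = B.filter (·.2 ≤ r)
  | 0 => by
    ext p
    simpa [pivRAux] using fun hp => ((hB p hp).trans_lt' two_pos).ne'
  | r + 1 => by
    rw [pivRAux, pivRAux_eq_filter hB hrow hcond hleft r]
    split_ifs with hr hex
    · subst hr
      ext p
      simpa using fun hp => by have := hB p hp; omega
    · obtain ⟨c, -, hcB⟩ := hleft r _ hex.choose_spec
      have hinf : sInf {c | pivCondR P (B.filter (·.2 ≤ r)) (r + 1) c} = c := by
        refine le_antisymm (Nat.sInf_le (hcond r c hcB)) (le_csInf ⟨c, hcond r c hcB⟩ ?_)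
        intro k hk
        obtain ⟨c', hc', hc'B⟩ := hleft r k hk
        exact (congrArg Prod.fst (hrow hcB hc'B rfl)).le.trans hc'
      rw [hinf, filter_snd_le_succ_of_mem hrow hcB]
    · exact (filter_snd_le_succ_of_notMem fun c hc => hex ⟨c, hcond r c hc⟩).symm

lemma exists_of_mem_bumps_rsSteps (hcol : Set.InjOn Prod.fst (P : Set Cell))
    (hrow : Set.InjOn Prod.snd (P : Set Cell)) {b : ℕ} (h : (c, b) ∈ bumps (rsSteps P) []) :
    (∃ v < b, (c, v) ∈ P) ∧ ∃ c' < c, (c', b) ∈ P := by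
  obtain ⟨v, hv, hvb⟩ := exists_lt_of_mem_bumps h
  obtain hb | ⟨c', hc', hb⟩ := entersBefore_of_mem_bumps (isInsertionInput_rsSteps hcol hrow) h
  · simp at hb
  · exact ⟨⟨v, hvb, (mem_rsSteps_iff hcol).1 hv⟩, c', hc', (mem_rsSteps_iff hcol).1 hb⟩

lemma pivCondR_of_mem_bumps (hcol : Set.InjOn Prod.fst (P : Set Cell))
    (hrow : Set.InjOn Prod.snd (P : Set Cell)) (hc : (c, r + 1) ∈ bumps (rsSteps P) []) :
    pivCondR P ((bumps (rsSteps P) []).toFinset.filter (·.2 ≤ r)) (r + 1) c := by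
  obtain ⟨⟨v, hvb, hv⟩, c', hc', hx⟩ := exists_of_mem_bumps_rsSteps hcol hrow hc
  refine ⟨⟨_, hx, rfl, hc'⟩, ⟨_, hv, rfl, hvb⟩, ?_⟩
  rintro ⟨c'', b⟩ hu rfl
  obtain ⟨hu, hbr⟩ := Finset.mem_filter.1 hu
  have hcolB := List.inj_on_of_nodup_map (bumps_nodup_fst (rsSteps_pairwise_fst P) (row := []))
  have := congrArg Prod.snd (hcolB (List.mem_toFinset.1 hu) hc rfl)
  simp only at this hbr
  omega

lemma exists_mem_bumps_le_of_pivCondR (hcol : Set.InjOn Prod.fst (P : Set Cell))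
    (hrow : Set.InjOn Prod.snd (P : Set Cell))
    (h : pivCondR P ((bumps (rsSteps P) []).toFinset.filter (·.2 ≤ r)) (r + 1) c) :
    ∃ c' ≤ c, (c', r + 1) ∈ bumps (rsSteps P) [] := by
  obtain ⟨⟨⟨x, _⟩, hx, rfl, hxc⟩, ⟨⟨_, y⟩, hy, rfl, hyr⟩, hfree⟩ := h
  rcases EntersBefore.bumped_or_bumps_lt (isInsertionInput_rsSteps hcol hrow)
      ((mem_rsSteps_iff hcol).2 hy) hyr (.inr ⟨x, hxc, (mem_rsSteps_iff hcol).2 hx⟩) with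
    h | ⟨b, hb, hcb⟩
  · exact h
  · exact absurd rfl (hfree (_, b) (Finset.mem_filter.2
      ⟨List.mem_toFinset.2 hcb, Nat.le_of_lt_succ hb⟩))

lemma pivRAux_eq_bumps (hcol : Set.InjOn Prod.fst (P : Set Cell))
    (hrow : Set.InjOn Prod.snd (P : Set Cell)) (hpos : ∀ p ∈ P, 1 ≤ p.2) (r : ℕ) :
    pivRAux P r = (bumps (rsSteps P) []).toFinset.filter (·.2 ≤ r) := by
  have hrowB := List.inj_on_of_nodup_map (bumps_nodup_snd (isInsertionInput_rsSteps hcol hrow))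
  refine pivRAux_eq_filter ?_ (fun p hp q hq => hrowB (List.mem_toFinset.1 hp)
      (List.mem_toFinset.1 hq)) (fun r c hc => pivCondR_of_mem_bumps hcol hrow
      (List.mem_toFinset.1 hc)) (fun r c hc => ?_) r
  · rintro ⟨c, b⟩ hb
    obtain ⟨⟨v, hvb, hv⟩, -⟩ :=
      exists_of_mem_bumps_rsSteps hcol hrow (List.mem_toFinset.1 hb)
    exact (Nat.succ_le_of_lt hvb).trans' (Nat.succ_le_succ (hpos _ hv))
  · obtain ⟨c', hc', hb⟩ := exists_mem_bumps_le_of_pivCondR hcol hrow hc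
    exact ⟨c', hc', List.mem_toFinset.2 hb⟩

end Pivots

lemma pivR_eq_bumps {m n : ℕ} {P : Finset Cell} (hP : IsPlacement (Rect m n) P) :
    pivR n P = (bumps (rsSteps P) []).toFinset := by
  have hcol : Set.InjOn Prod.fst (P : Set Cell) := fun p hp q hq => hP.2.1 p hp q hq
  have hrow : Set.InjOn Prod.snd (P : Set Cell) := fun p hp q hq => hP.2.2 p hp q hq
  have hRect {p : Cell} (hp : p ∈ P) : 1 ≤ p.2 ∧ p.2 ≤ n := by
    have := Finset.mem_product.1 (hP.1 hp)
    simpa using this.2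
  rw [pivR, pivRAux_eq_bumps hcol hrow (fun p hp => (hRect hp).1), Finset.filter_true_of_mem]
  rintro ⟨c, b⟩ hb
  obtain ⟨-, c', -, hb⟩ := exists_of_mem_bumps_rsSteps hcol hrow (List.mem_toFinset.1 hb)
  exact (hRect hb).2

/-- **Theorem.** For a rook placement `P` on a rectangular Ferrers board,
`ins(pivR(P)) = (ins(P))⁻` and `rec(pivR(P)) = (rec(P))⁻`, where `Y⁻` removes the top
row of the tableau `Y`. -/
theorem ins_rec_pivR (m n : ℕ) (P : Finset Cell) (hP : IsPlacement (Rect m n) P) :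
    insTab (pivR n P) = (insTab P).tail ∧ recTab (pivR n P) = (recTab P).tail := by
  have hsteps : rsSteps (pivR n P) = bumps (rsSteps P) [] := by
    rw [pivR_eq_bumps hP]
    exact rsSteps_toFinset (bumps_pairwise_fst (rsSteps_pairwise_fst P))
  have htail : Prod.map List.tail List.tail (rsPair P) = rsPair (pivR n P) := by
    rw [rsPair_eq_foldl, rsPair_eq_foldl, hsteps]
    exact foldl_rsStep_tail (rsSteps P) (TR := ([], [])) rfl
  exact (Prod.ext_iff.1 htail).imp Eq.symm Eq.symm
end

section
/- Lemma: If P is a rook placement on a rectangular Ferrers board F, then (pivL(P))^tr = pivL(P^tr), where ^tr denotes reflection across the NW–SE diagonal. -/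
open scoped Classical

/-- Reflection of (a placement on) the rectangular board `R(m,n)` across the NW–SE
diagonal: `(i,j) ↦ (n + 1 - j, m + 1 - i)`, a placement on `R(n,m)`. -/
def trP (m n : ℕ) (P : Finset Cell) : Finset Cell :=
  P.image fun p => (n + 1 - p.2, m + 1 - p.1)

namespace PivTranspose

/-! ### Auxiliary notions: validity, injectivity, and the two greedy properties -/

/-- Each pivot in `Q` is "valid" for the placement `P`: the pivot's row contains a
rook of `P` strictly to the right, and the pivot's column contains a rook of `P`
strictly below. -/
def Valid (P Q : Finset Cell) : Prop :=
  ∀ v ∈ Q, (∃ x ∈ P, x.2 = v.2 ∧ v.1 < x.1) ∧ (∃ y ∈ P, y.1 = v.1 ∧ y.2 < v.2)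

def ColInj (Q : Finset Cell) : Prop := ∀ v ∈ Q, ∀ w ∈ Q, v.1 = w.1 → v = w

def RowInj (Q : Finset Cell) : Prop := ∀ v ∈ Q, ∀ w ∈ Q, v.2 = w.2 → v = w

/-- "Down-greedy" record: whenever `y` is SW of `z` in `P` and every pivot in the
column of `y` lies strictly above the row of `z`, then the row of `z` carries a pivot
strictly to the right of the column of `y`. -/
def DG (P Q : Finset Cell) : Prop :=
  ∀ y ∈ P, ∀ z ∈ P, y.1 < z.1 → y.2 < z.2 →
    (∀ v ∈ Q, v.1 = y.1 → z.2 < v.2) → ∃ w ∈ Q, w.2 = z.2 ∧ y.1 < w.1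

/-- "Up-greedy" record: the transpose-dual of `DG`. -/
def UG (P Q : Finset Cell) : Prop :=
  ∀ z ∈ P, ∀ x ∈ P, z.1 < x.1 → z.2 < x.2 →
    (∀ v ∈ Q, v.2 = x.2 → v.1 < z.1) → ∃ w ∈ Q, w.1 = z.1 ∧ w.2 < x.2

/-! ### Basic facts about `pivLAux` -/

lemma aux_succ (P : Finset Cell) (r : ℕ) :
    pivLAux P (r + 1) =
      if r = 0 then pivLAux P r
      else if ∃ c, pivCondL P (pivLAux P r) (r + 1) c then
        insert (sSup {c | pivCondL P (pivLAux P r) (r + 1) c}, r + 1) (pivLAux P r)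
      else pivLAux P r := rfl

lemma aux_subset_succ (P : Finset Cell) (r : ℕ) : pivLAux P r ⊆ pivLAux P (r + 1) := by
  rw [aux_succ]
  split_ifs
  · exact subset_rfl
  · exact Finset.subset_insert _ _
  · exact subset_rfl

lemma aux_mono (P : Finset Cell) {r s : ℕ} (h : r ≤ s) : pivLAux P r ⊆ pivLAux P s := by
  induction h with
  | refl => exact subset_rfl
  | step _ ih => exact ih.trans (aux_subset_succ P _)

/-- The full invariant of the recursion: every pivot is valid, rows lie in `[2, r]`,
and the pivot set is injective in rows and columns. -/
lemma aux_inv (P : Finset Cell) (B : ℕ) (hB : ∀ p ∈ P, p.1 ≤ B) (r : ℕ) :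
    (∀ v ∈ pivLAux P r, 2 ≤ v.2 ∧ v.2 ≤ r ∧
      ((∃ x ∈ P, x.2 = v.2 ∧ v.1 < x.1) ∧ ∃ y ∈ P, y.1 = v.1 ∧ y.2 < v.2)) ∧
      ColInj (pivLAux P r) ∧ RowInj (pivLAux P r) := by
  induction r with
  | zero =>
    refine ⟨fun v hv => ?_, fun v hv => ?_, fun v hv => ?_⟩ <;>
      · simp only [pivLAux] at hv
        exact absurd hv (Finset.notMem_empty v)
  | succ r ih =>
    obtain ⟨ihv, ihc, ihr⟩ := ih
    rw [aux_succ]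
    split_ifs with h0 hex
    · exact ⟨fun v hv => by
        obtain ⟨a, b, c⟩ := ihv v hv; exact ⟨a, by omega, c⟩, ihc, ihr⟩
    · have hbdd : BddAbove {c | pivCondL P (pivLAux P r) (r + 1) c} := by
        refine ⟨B, fun c hc => ?_⟩
        obtain ⟨⟨x, hx, -, hcx⟩, -, -⟩ := hc
        have := hB x hx
        omega
      have hmem : sSup {c | pivCondL P (pivLAux P r) (r + 1) c} ∈
          {c | pivCondL P (pivLAux P r) (r + 1) c} := Nat.sSup_mem hex hbdd
      obtain ⟨⟨x, hx, hx2, hx1⟩, ⟨y, hy, hy1, hy2⟩, hnew⟩ := hmem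
      refine ⟨?_, ?_, ?_⟩
      · intro v hv
        rcases Finset.mem_insert.mp hv with h | h
        · subst h
          exact ⟨by omega, le_refl _, ⟨x, hx, hx2, hx1⟩, ⟨y, hy, hy1, hy2⟩⟩
        · obtain ⟨a, b, c⟩ := ihv v h
          exact ⟨a, by omega, c⟩
      · intro v hv w hw
        rcases Finset.mem_insert.mp hv with h | h <;>
          rcases Finset.mem_insert.mp hw with h' | h'
        · subst h; subst h'; intro _; rfl
        · subst h; intro he; exact absurd he.symm (hnew w h')
        · subst h'; intro he; exact absurd he (hnew v h)
        · exact ihc v h w h'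
      · intro v hv w hw
        rcases Finset.mem_insert.mp hv with h | h <;>
          rcases Finset.mem_insert.mp hw with h' | h'
        · subst h; subst h'; intro _; rfl
        · subst h
          intro he
          have := (ihv w h').2.1
          exfalso; omega
        · subst h'
          intro he
          have := (ihv v h).2.1
          exfalso; omega
        · exact ihr v h w h'
    · exact ⟨fun v hv => by
        obtain ⟨a, b, c⟩ := ihv v hv; exact ⟨a, by omega, c⟩, ihc, ihr⟩

/-- If some column satisfies the pivot condition at step `r + 1` (with `r ≥ 1`), then
a pivot is created in row `r + 1` whose column is at least that column. -/
lemma aux_step (P : Finset Cell) (B : ℕ) (hB : ∀ p ∈ P, p.1 ≤ B) (r : ℕ) (hr : 1 ≤ r)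
    (c : ℕ) (hc : pivCondL P (pivLAux P r) (r + 1) c) :
    ∃ w ∈ pivLAux P (r + 1), w.2 = r + 1 ∧ c ≤ w.1 := by
  have hbdd : BddAbove {c | pivCondL P (pivLAux P r) (r + 1) c} := by
    refine ⟨B, fun c' hc' => ?_⟩
    obtain ⟨⟨x, hx, -, hcx⟩, -, -⟩ := hc'
    have := hB x hx
    omega
  have hcS : c ∈ {c | pivCondL P (pivLAux P r) (r + 1) c} := hc
  refine ⟨(sSup {c | pivCondL P (pivLAux P r) (r + 1) c}, r + 1), ?_, rfl,
    le_csSup hbdd hcS⟩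
  rw [aux_succ, if_neg (by omega), if_pos ⟨c, hc⟩]
  exact Finset.mem_insert_self _ _

/-- The pivot construction satisfies the down-greedy property. -/
lemma dg_aux (P : Finset Cell) (B n : ℕ) (hB : ∀ p ∈ P, p.1 ≤ B)
    (hpos : ∀ p ∈ P, 1 ≤ p.2) (hn : ∀ p ∈ P, p.2 ≤ n) :
    DG P (pivLAux P n) := by
  intro y hy z hz h1 h2 H
  have hy2 : 1 ≤ y.2 := hpos y hy
  obtain ⟨r, hr⟩ : ∃ r, z.2 = r + 1 := ⟨z.2 - 1, by omega⟩
  have hrn : r + 1 ≤ n := hr ▸ hn z hz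
  have hcond : pivCondL P (pivLAux P r) (r + 1) y.1 := by
    refine ⟨⟨z, hz, hr, h1⟩, ⟨y, hy, rfl, by omega⟩, ?_⟩
    intro v hv hv1
    have hvn : v ∈ pivLAux P n := aux_mono P (by omega) hv
    have h3 := H v hvn hv1
    have h4 := ((aux_inv P B hB r).1 v hv).2.1
    omega
  obtain ⟨w, hw, hw2, hw1⟩ := aux_step P B hB r (by omega) y.1 hcond
  have hwn : w ∈ pivLAux P n := aux_mono P hrn hw
  have hne : w.1 ≠ y.1 := by
    intro he
    have := H w hwn he
    omega
  exact ⟨w, hwn, by omega, by omega⟩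

/-- The pivot construction satisfies the up-greedy property. -/
lemma ug_aux (P : Finset Cell) (B n : ℕ) (hB : ∀ p ∈ P, p.1 ≤ B)
    (hpos : ∀ p ∈ P, 1 ≤ p.2) (hn : ∀ p ∈ P, p.2 ≤ n) :
    UG P (pivLAux P n) := by
  intro z hz x hx h1 h2 H
  have hz2 : 1 ≤ z.2 := hpos z hz
  obtain ⟨r, hr⟩ : ∃ r, x.2 = r + 1 := ⟨x.2 - 1, by omega⟩
  have hrn : r + 1 ≤ n := hr ▸ hn x hx
  by_cases hcase : ∃ v ∈ pivLAux P r, v.1 = z.1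
  · obtain ⟨v, hv, hv1⟩ := hcase
    have h4 := ((aux_inv P B hB r).1 v hv).2.1
    exact ⟨v, aux_mono P (by omega) hv, hv1, by omega⟩
  · push_neg at hcase
    have hcond : pivCondL P (pivLAux P r) (r + 1) z.1 :=
      ⟨⟨x, hx, hr, h1⟩, ⟨z, hz, rfl, by omega⟩, hcase⟩
    obtain ⟨w, hw, hw2, hw1⟩ := aux_step P B hB r (by omega) z.1 hcond
    have hwn : w ∈ pivLAux P n := aux_mono P hrn hw
    have := H w hwn (by omega)
    exfalso; omega

/-! ### Uniqueness of a valid, injective, down-greedy pivot set -/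

lemma unique_step (P Q1 Q2 : Finset Cell)
    (hPc : ∀ p ∈ P, ∀ q ∈ P, p.1 = q.1 → p = q)
    (h1 : Valid P Q1) (c1 : ColInj Q1) (r1 : RowInj Q1) (d1 : DG P Q1)
    (h2 : Valid P Q2) (c2 : ColInj Q2) (r2 : RowInj Q2) (d2 : DG P Q2)
    (c : ℕ) (IH : ∀ w : Cell, c + 1 ≤ w.1 → (w ∈ Q1 ↔ w ∈ Q2))
    (w : Cell) (hw : w ∈ Q1) (hwc : w.1 = c) : w ∈ Q2 := by
  obtain ⟨⟨x, hx, hx2, hx1⟩, ⟨y, hy, hy1, hy2⟩⟩ := h1 w hw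
  by_cases hu : ∃ u ∈ Q2, u.1 = c
  · obtain ⟨u, hu2, huc⟩ := hu
    obtain ⟨⟨x', hx', hx'2, hx'1⟩, ⟨y', hy', hy'1, hy'2⟩⟩ := h2 u hu2
    have hyy : y' = y := hPc y' hy' y hy (by omega)
    rw [hyy] at hy'2
    rcases lt_trichotomy u.2 w.2 with h | h | h
    · obtain ⟨w', hw', hw'2, hw'1⟩ := d1 y hy x' hx' (by omega) (by omega)
        (fun v hv hv1 => by
          have hvw : v = w := c1 v hv w hw (by omega)
          subst hvw
          omega)
      have hw'Q2 : w' ∈ Q2 := (IH w' (by omega)).mp hw'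
      have heq : w' = u := r2 w' hw'Q2 u hu2 (by omega)
      have : w'.1 = u.1 := by rw [heq]
      exfalso; omega
    · have heq : u = w := Prod.ext (by omega) h
      rwa [heq] at hu2
    · obtain ⟨w', hw', hw'2, hw'1⟩ := d2 y hy x hx (by omega) (by omega)
        (fun v hv hv1 => by
          have hvu : v = u := c2 v hv u hu2 (by omega)
          subst hvu
          omega)
      have hw'Q1 : w' ∈ Q1 := (IH w' (by omega)).mpr hw'
      have heq : w' = w := r1 w' hw'Q1 w hw (by omega)
      have : w'.1 = w.1 := by rw [heq]
      exfalso; omega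
  · obtain ⟨w', hw', hw'2, hw'1⟩ := d2 y hy x hx (by omega) (by omega)
      (fun v hv hv1 => absurd ⟨v, hv, by omega⟩ hu)
    have hw'Q1 : w' ∈ Q1 := (IH w' (by omega)).mpr hw'
    have heq : w' = w := r1 w' hw'Q1 w hw (by omega)
    have : w'.1 = w.1 := by rw [heq]
    exfalso; omega

lemma piv_unique (P Q1 Q2 : Finset Cell) (B : ℕ) (hB : ∀ p ∈ P, p.1 ≤ B)
    (hPc : ∀ p ∈ P, ∀ q ∈ P, p.1 = q.1 → p = q)
    (h1 : Valid P Q1) (c1 : ColInj Q1) (r1 : RowInj Q1) (d1 : DG P Q1)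
    (h2 : Valid P Q2) (c2 : ColInj Q2) (r2 : RowInj Q2) (d2 : DG P Q2) :
    Q1 = Q2 := by
  have key : ∀ k c, B + 1 ≤ c + k → ∀ w : Cell, c ≤ w.1 → (w ∈ Q1 ↔ w ∈ Q2) := by
    intro k
    induction k with
    | zero =>
      intro c hc w hcw
      constructor <;> intro hw <;> exfalso
      · obtain ⟨⟨x, hx, -, hx1⟩, -⟩ := h1 w hw
        have := hB x hx; omega
      · obtain ⟨⟨x, hx, -, hx1⟩, -⟩ := h2 w hw
        have := hB x hx; omega
    | succ k ih =>
      intro c hc w hcw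
      by_cases hgt : c + 1 ≤ w.1
      · exact ih (c + 1) (by omega) w hgt
      · have hwc : w.1 = c := by omega
        have IH : ∀ w : Cell, c + 1 ≤ w.1 → (w ∈ Q1 ↔ w ∈ Q2) :=
          fun w hw => ih (c + 1) (by omega) w hw
        exact ⟨fun hw => unique_step P Q1 Q2 hPc h1 c1 r1 d1 h2 c2 r2 d2 c IH w hw hwc,
          fun hw => unique_step P Q2 Q1 hPc h2 c2 r2 d2 h1 c1 r1 d1 c
            (fun w hw => (IH w hw).symm) w hw hwc⟩
  ext w
  exact key (B + 1) 0 (by omega) w (Nat.zero_le _)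

/-! ### Transposition -/

lemma mem_trP {m n : ℕ} {Q : Finset Cell} {w : Cell} :
    w ∈ trP m n Q ↔ ∃ v ∈ Q, (n + 1 - v.2, m + 1 - v.1) = w := by
  simp [trP]

/-- All cells of `Q` lie in the rectangle `[1, m] × [1, n]`. -/
def InRect (m n : ℕ) (Q : Finset Cell) : Prop :=
  ∀ p ∈ Q, 1 ≤ p.1 ∧ p.1 ≤ m ∧ 1 ≤ p.2 ∧ p.2 ≤ n

lemma valid_bounds {m n : ℕ} {P Q : Finset Cell} (hP : InRect m n P) (hQ : Valid P Q) :
    InRect m n Q := by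
  intro v hv
  obtain ⟨⟨x, hx, hx2, hx1⟩, ⟨y, hy, hy1, hy2⟩⟩ := hQ v hv
  have h3 := hP x hx
  have h4 := hP y hy
  omega

lemma inRect_trP {m n : ℕ} {P : Finset Cell} (hP : InRect m n P) :
    InRect n m (trP m n P) := by
  intro p hp
  obtain ⟨v, hv, rfl⟩ := mem_trP.mp hp
  have := hP v hv
  dsimp only
  omega

lemma valid_tr {m n : ℕ} {P Q : Finset Cell} (hP : InRect m n P) (hQb : InRect m n Q)
    (hQ : Valid P Q) : Valid (trP m n P) (trP m n Q) := by
  intro v' hv'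
  obtain ⟨v, hv, rfl⟩ := mem_trP.mp hv'
  obtain ⟨⟨x, hx, hx2, hx1⟩, ⟨y, hy, hy1, hy2⟩⟩ := hQ v hv
  have hxb := hP x hx
  have hyb := hP y hy
  have hvb := hQb v hv
  constructor
  · exact ⟨(n + 1 - y.2, m + 1 - y.1), mem_trP.mpr ⟨y, hy, rfl⟩, by dsimp only; omega,
      by dsimp only; omega⟩
  · exact ⟨(n + 1 - x.2, m + 1 - x.1), mem_trP.mpr ⟨x, hx, rfl⟩, by dsimp only; omega,
      by dsimp only; omega⟩

lemma colinj_tr {m n : ℕ} {Q : Finset Cell} (hQb : InRect m n Q) (hQ : RowInj Q) :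
    ColInj (trP m n Q) := by
  intro v' hv' w' hw' h
  obtain ⟨v, hv, rfl⟩ := mem_trP.mp hv'
  obtain ⟨w, hw, rfl⟩ := mem_trP.mp hw'
  have hvb := hQb v hv
  have hwb := hQb w hw
  dsimp only at h ⊢
  have hvw : v = w := hQ v hv w hw (by omega)
  rw [hvw]

lemma rowinj_tr {m n : ℕ} {Q : Finset Cell} (hQb : InRect m n Q) (hQ : ColInj Q) :
    RowInj (trP m n Q) := by
  intro v' hv' w' hw' h
  obtain ⟨v, hv, rfl⟩ := mem_trP.mp hv'
  obtain ⟨w, hw, rfl⟩ := mem_trP.mp hw'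
  have hvb := hQb v hv
  have hwb := hQb w hw
  dsimp only at h ⊢
  have hvw : v = w := hQ v hv w hw (by omega)
  rw [hvw]

/-- The up-greedy property transposes to the down-greedy property. -/
lemma ug_to_dg {m n : ℕ} {P Q : Finset Cell} (hP : InRect m n P) (hQb : InRect m n Q)
    (hUG : UG P Q) : DG (trP m n P) (trP m n Q) := by
  intro y' hy' z' hz' h1 h2 H
  obtain ⟨y, hy, rfl⟩ := mem_trP.mp hy'
  obtain ⟨z, hz, rfl⟩ := mem_trP.mp hz'
  have hyb := hP y hy
  have hzb := hP z hz
  dsimp only at h1 h2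
  obtain ⟨w, hw, hw1, hw2⟩ := hUG z hz y hy (by omega) (by omega)
    (fun v hv hv2 => by
      have hvb := hQb v hv
      have h5 := H (n + 1 - v.2, m + 1 - v.1) (mem_trP.mpr ⟨v, hv, rfl⟩)
        (by dsimp only; omega)
      dsimp only at h5
      omega)
  have hwb := hQb w hw
  exact ⟨(n + 1 - w.2, m + 1 - w.1), mem_trP.mpr ⟨w, hw, rfl⟩, by dsimp only; omega,
    by dsimp only; omega⟩

end PivTranspose


open PivTranspose in
/-- **Lemma.** For a rook placement `P` on the rectangular board `R(m,n)`,
`(pivL(P))^tr = pivL(P^tr)`. -/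
theorem pivL_transpose (m n : ℕ) (P : Finset Cell) (hP : IsPlacement (Rect m n) P) :
    trP m n (pivL n P) = pivL m (trP m n P) := by
  obtain ⟨hsub, hcol, hrow⟩ := hP
  have hPR : InRect m n P := by
    intro p hp
    have := hsub hp
    simp only [Rect, Finset.mem_product, Finset.mem_Icc] at this
    omega
  have hB : ∀ p ∈ P, p.1 ≤ m := fun p hp => (hPR p hp).2.1
  have hpos : ∀ p ∈ P, 1 ≤ p.2 := fun p hp => (hPR p hp).2.2.1
  have hn : ∀ p ∈ P, p.2 ≤ n := fun p hp => (hPR p hp).2.2.2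
  obtain ⟨hval, hcolQ, hrowQ⟩ := aux_inv P m hB n
  have hValid : Valid P (pivLAux P n) := fun v hv => (hval v hv).2.2
  have hQb : InRect m n (pivLAux P n) := valid_bounds hPR hValid
  have hUG : UG P (pivLAux P n) := ug_aux P m n hB hpos hn
  have hP'R : InRect n m (trP m n P) := inRect_trP hPR
  have hB' : ∀ p ∈ trP m n P, p.1 ≤ n := fun p hp => (hP'R p hp).2.1
  have hpos' : ∀ p ∈ trP m n P, 1 ≤ p.2 := fun p hp => (hP'R p hp).2.2.1
  have hn' : ∀ p ∈ trP m n P, p.2 ≤ m := fun p hp => (hP'R p hp).2.2.2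
  have hP'c : ∀ p ∈ trP m n P, ∀ q ∈ trP m n P, p.1 = q.1 → p = q := by
    intro p hp q hq h
    obtain ⟨a, ha, rfl⟩ := mem_trP.mp hp
    obtain ⟨b, hb, rfl⟩ := mem_trP.mp hq
    have hab := hPR a ha
    have hbb := hPR b hb
    dsimp only at h ⊢
    have : a = b := hrow a ha b hb (by omega)
    rw [this]
  obtain ⟨hval', hcolQ', hrowQ'⟩ := aux_inv (trP m n P) n hB' m
  have hValid' : Valid (trP m n P) (pivLAux (trP m n P) m) := fun v hv => (hval' v hv).2.2
  have hDG' : DG (trP m n P) (pivLAux (trP m n P) m) := dg_aux (trP m n P) n m hB' hpos' hn'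
  show trP m n (pivLAux P n) = pivLAux (trP m n P) m
  exact piv_unique (trP m n P) (trP m n (pivLAux P n)) (pivLAux (trP m n P) m) n hB' hP'c
    (valid_tr hPR hQb hValid) (colinj_tr hQb hrowQ) (rowinj_tr hQb hcolQ)
    (ug_to_dg hPR hQb hUG)
    hValid' hcolQ' hrowQ' hDG'
end

section
/- Lemma: Let P be a rook placement on a rectangular Ferrers board and let X, Y ∈ P form a 12-pattern. Then it is impossible that both row(Y) < ρ(X) and κ(Y) < col(X). -/
open scoped Classical

/-- `ρ(X)`: the row of the (left) pivot in the column of `X`, or `∞` if there is none. -/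
noncomputable def rho (n : ℕ) (P : Finset Cell) (X : Cell) : ℕ∞ :=
  if ∃ r, (X.1, r) ∈ pivL n P then ((sSup {r | (X.1, r) ∈ pivL n P} : ℕ) : ℕ∞) else ⊤

/-- `κ(X)`: the column of the (left) pivot in the row of `X`, or `0` if there is none. -/
noncomputable def kappa (n : ℕ) (P : Finset Cell) (X : Cell) : ℕ :=
  sSup {c | (c, X.2) ∈ pivL n P}

/-- A pivot-path: an increasing subsequence `I` of `P` such that each consecutive pair
creates a pivot, i.e. `ρ(I_i) = row(I_{i+1})` for all `i`. -/
def IsPivotPath (n : ℕ) (P : Finset Cell) (m : ℕ) (I : Fin m → Cell) : Prop :=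
  IsIncSeq P m I ∧ ∀ (i : Fin m) (h : i.1 + 1 < m),
    rho n P (I i) = ((I ⟨i.1 + 1, h⟩).2 : ℕ∞)


section AuxPivot

lemma pivLAux_subset_succ (P : Finset Cell) (b : ℕ) : pivLAux P b ⊆ pivLAux P (b+1) := by
  rw [pivLAux]
  split_ifs with h1 h2
  · exact Finset.Subset.refl _
  · exact Finset.subset_insert _ _
  · exact Finset.Subset.refl _

lemma pivLAux_mono (P : Finset Cell) {a b : ℕ} (h : a ≤ b) : pivLAux P a ⊆ pivLAux P b := by
  induction h with
  | refl => exact Finset.Subset.refl _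
  | step _ ih => exact ih.trans (pivLAux_subset_succ _ _)

lemma pivLAux_row_le (P : Finset Cell) : ∀ k, ∀ p ∈ pivLAux P k, p.2 ≤ k := by
  intro k
  induction k with
  | zero => intro p hp; simp [pivLAux] at hp
  | succ k ih =>
    intro p hp
    rw [pivLAux] at hp
    split_ifs at hp with h1 h2
    · exact (ih p hp).trans (Nat.le_succ k)
    · rcases Finset.mem_insert.mp hp with h | h
      · rw [h]
      · exact (ih p h).trans (Nat.le_succ k)
    · exact (ih p hp).trans (Nat.le_succ k)

lemma pivCondL_col_le {m n : ℕ} {P prev : Finset Cell} (hP : P ⊆ Rect m n) {r c : ℕ}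
    (h : pivCondL P prev r c) : c ≤ m := by
  obtain ⟨-, ⟨y, hy, hyc, -⟩, -⟩ := h
  have := hP hy
  simp only [Rect, Finset.mem_product, Finset.mem_Icc] at this
  omega

lemma pivCondL_bdd {m n : ℕ} {P prev : Finset Cell} (hP : P ⊆ Rect m n) (r : ℕ) :
    BddAbove {c | pivCondL P prev r c} :=
  ⟨m, fun _ hc => pivCondL_col_le hP hc⟩

lemma pivLAux_col_le {m n : ℕ} {P : Finset Cell} (hP : P ⊆ Rect m n) :
    ∀ k, ∀ p ∈ pivLAux P k, p.1 ≤ m := by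
  intro k
  induction k with
  | zero => intro p hp; simp [pivLAux] at hp
  | succ k ih =>
    intro p hp
    rw [pivLAux] at hp
    split_ifs at hp with h1 h2
    · exact ih p hp
    · rcases Finset.mem_insert.mp hp with h | h
      · have hmem : sSup {c | pivCondL P (pivLAux P k) (k+1) c} ∈
            {c | pivCondL P (pivLAux P k) (k+1) c} :=
          Nat.sSup_mem h2 (pivCondL_bdd hP _)
        rw [h]
        exact pivCondL_col_le hP hmem
      · exact ih p h
    · exact ih p hp

lemma pivLAux_col_inj {m n : ℕ} {P : Finset Cell} (hP : P ⊆ Rect m n) :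
    ∀ k, ∀ p ∈ pivLAux P k, ∀ q ∈ pivLAux P k, p.1 = q.1 → p = q := by
  intro k
  induction k with
  | zero => intro p hp; simp [pivLAux] at hp
  | succ k ih =>
    intro p hp q hq hpq
    rw [pivLAux] at hp hq
    split_ifs at hp hq with h1 h2
    · exact ih p hp q hq hpq
    · have hmem : sSup {c | pivCondL P (pivLAux P k) (k+1) c} ∈
          {c | pivCondL P (pivLAux P k) (k+1) c} :=
        Nat.sSup_mem h2 (pivCondL_bdd hP _)
      obtain ⟨-, -, hnot⟩ := hmem
      rcases Finset.mem_insert.mp hp with h | h <;>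
        rcases Finset.mem_insert.mp hq with h' | h'
      · rw [h, h']
      · exact absurd (by rw [← hpq, h]) (hnot q h').symm
      · exact absurd (by rw [hpq, h']) (hnot p h)
      · exact ih p h q h' hpq
    · exact ih p hp q hq hpq

end AuxPivot

/-- **Lemma.** If `X, Y ∈ P` form a 12-pattern, then it is impossible that both
`row(Y) < ρ(X)` and `κ(Y) < col(X)`. -/
theorem lemma_pivot1 (m n : ℕ) (P : Finset Cell) (hP : IsPlacement (Rect m n) P)
    (X Y : Cell) (hX : X ∈ P) (hY : Y ∈ P)
    (h12 : X.1 < Y.1 ∧ X.2 < Y.2) :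
    ¬ ((Y.2 : ℕ∞) < rho n P X ∧ kappa n P Y < X.1) := by
  rintro ⟨hrho, hkappa⟩
  obtain ⟨hPF, hcol, hrowP⟩ := hP
  have hXR := hPF hX
  have hYR := hPF hY
  simp only [Rect, Finset.mem_product, Finset.mem_Icc] at hXR hYR
  obtain ⟨r0, hr0⟩ : ∃ r0, Y.2 = r0 + 1 := ⟨Y.2 - 1, by omega⟩
  have hr0pos : r0 ≠ 0 := by omega
  have hr0n : r0 + 1 ≤ n := by omega
  set prev := pivLAux P r0 with hprev
  set S := {c | pivCondL P prev (r0 + 1) c} with hS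
  have hSbdd : BddAbove S := pivCondL_bdd hPF _
  have hX1S : X.1 ∈ S := by
    refine ⟨⟨Y, hY, by omega, by omega⟩, ⟨X, hX, rfl, by omega⟩, ?_⟩
    intro v hv hvc
    have hvn : v ∈ pivL n P := pivLAux_mono P (by omega : r0 ≤ n) hv
    have hne : ∃ r, (X.1, r) ∈ pivL n P := ⟨v.2, by
      have : (X.1, v.2) = v := Prod.ext hvc.symm rfl
      rw [this]; exact hvn⟩
    rw [rho, if_pos hne] at hrho
    have hlt : Y.2 < sSup {r | (X.1, r) ∈ pivL n P} := by exact_mod_cast hrho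
    have hTbdd : BddAbove {r | (X.1, r) ∈ pivL n P} :=
      ⟨n, fun r hr => pivLAux_row_le P n _ hr⟩
    have hTmem : sSup {r | (X.1, r) ∈ pivL n P} ∈ {r | (X.1, r) ∈ pivL n P} :=
      Nat.sSup_mem ⟨v.2, by
        have h' : (X.1, v.2) = v := Prod.ext hvc.symm rfl
        show (X.1, v.2) ∈ pivL n P
        rw [h']; exact hvn⟩ hTbdd
    have heq : (X.1, sSup {r | (X.1, r) ∈ pivL n P}) = v :=
      pivLAux_col_inj hPF n _ hTmem v hvn (by rw [hvc])
    have hvr : v.2 ≤ r0 := pivLAux_row_le P r0 v hv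
    have : v.2 = sSup {r | (X.1, r) ∈ pivL n P} := by rw [← heq]
    omega
  have hEx : ∃ c, pivCondL P prev (r0 + 1) c := ⟨X.1, hX1S⟩
  have hcle : X.1 ≤ sSup S := le_csSup hSbdd hX1S
  have hmemstep : (sSup S, r0 + 1) ∈ pivLAux P (r0 + 1) := by
    rw [pivLAux, if_neg hr0pos, if_pos hEx]
    exact Finset.mem_insert_self _ _
  have hmemn : (sSup S, r0 + 1) ∈ pivL n P := pivLAux_mono P hr0n hmemstep
  have hkb : BddAbove {c | (c, Y.2) ∈ pivL n P} :=
    ⟨m, fun c hc => pivLAux_col_le hPF n _ hc⟩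
  have : sSup S ≤ kappa n P Y := le_csSup hkb (by show (sSup S, Y.2) ∈ pivL n P; rw [hr0]; exact hmemn)
  omega
end

section
/- Lemma: Let P be a rook placement on a rectangular Ferrers board, let S = S₁…S_k be a decreasing sequence of length k in P, and let X ∈ P be such that X S₁ is a 12-pattern. If ρ(X) > row(S₁), then there exists a decreasing sequence D of length k+1 in P with first element D₁ = X. If X and S₁ are the first and last elements of a pivot-path, then there exists a decreasing sequence D of length k in P with first element D₁ = X. -/
open scoped Classical

namespace Piv

lemma mem_rect_of {m n : ℕ} {P : Finset Cell} (hP : IsPlacement (Rect m n) P)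
    {x : Cell} (hx : x ∈ P) : 1 ≤ x.1 ∧ x.1 ≤ m ∧ 1 ≤ x.2 ∧ x.2 ≤ n := by
  have := hP.1 hx
  simp only [Rect, Finset.mem_product, Finset.mem_Icc] at this
  tauto

lemma pivCond_bdd {m n : ℕ} {P : Finset Cell} (hP : IsPlacement (Rect m n) P)
    (prev : Finset Cell) (r : ℕ) : BddAbove {c | pivCondL P prev r c} := by
  refine ⟨m, fun c hc => ?_⟩
  obtain ⟨⟨x, hx, _, hcx⟩, _, _⟩ := hc
  have := mem_rect_of hP hx
  omega

lemma pivCond_sSup_mem {m n : ℕ} {P : Finset Cell} (hP : IsPlacement (Rect m n) P)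
    {prev : Finset Cell} {r : ℕ} (h : ∃ c, pivCondL P prev r c) :
    pivCondL P prev r (sSup {c | pivCondL P prev r c}) :=
  Nat.sSup_mem h (pivCond_bdd hP prev r)

lemma pivLAux_succ (P : Finset Cell) (r : ℕ) (hr : r ≠ 0) :
    pivLAux P (r + 1) =
      if ∃ c, pivCondL P (pivLAux P r) (r + 1) c then
        insert (sSup {c | pivCondL P (pivLAux P r) (r + 1) c}, r + 1) (pivLAux P r)
      else pivLAux P r := by
  rw [pivLAux]
  simp [hr]

lemma pivLAux_subset_succ (P : Finset Cell) (r : ℕ) :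
    pivLAux P r ⊆ pivLAux P (r + 1) := by
  rcases eq_or_ne r 0 with h | h
  · subst h; rw [pivLAux]; simp
  · rw [pivLAux_succ P r h]
    split_ifs with h2
    · exact Finset.subset_insert _ _
    · exact subset_rfl

lemma pivLAux_mono (P : Finset Cell) {r s : ℕ} (h : r ≤ s) :
    pivLAux P r ⊆ pivLAux P s := by
  induction s with
  | zero => simp [Nat.le_zero.mp h]
  | succ s ih =>
    rcases Nat.lt_or_ge r (s+1) with h1 | h1
    · exact (ih (by omega)).trans (pivLAux_subset_succ P s)
    · have : r = s + 1 := by omega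
      subst this; exact subset_rfl

lemma row_of_mem_pivLAux {P : Finset Cell} {p : Cell} :
    ∀ {r : ℕ}, p ∈ pivLAux P r → 2 ≤ p.2 ∧ p.2 ≤ r := by
  intro r
  induction r with
  | zero => intro h; simp [pivLAux] at h
  | succ r ih =>
    intro h
    rcases eq_or_ne r 0 with h0 | h0
    · subst h0; rw [pivLAux] at h; simp at h
      exact absurd h (by simp [pivLAux])
    · rw [pivLAux_succ P r h0] at h
      split_ifs at h with h2
      · rcases Finset.mem_insert.mp h with h3 | h3
        · subst h3; omega
        · have := ih h3; omega
      · have := ih h; omega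

lemma pivLAux_col_unique {m n : ℕ} {P : Finset Cell} (hP : IsPlacement (Rect m n) P) :
    ∀ {r : ℕ}, ∀ p ∈ pivLAux P r, ∀ q ∈ pivLAux P r, p.1 = q.1 → p = q := by
  intro r
  induction r with
  | zero => intro p hp; simp [pivLAux] at hp
  | succ r ih =>
    intro p hp q hq hpq
    rcases eq_or_ne r 0 with h0 | h0
    · subst h0; rw [pivLAux] at hp; simp at hp
      exact absurd hp (by simp [pivLAux])
    · rw [pivLAux_succ P r h0] at hp hq
      split_ifs at hp hq with h2
      · have hc := pivCond_sSup_mem hP h2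
        rcases Finset.mem_insert.mp hp with h3 | h3 <;>
          rcases Finset.mem_insert.mp hq with h4 | h4
        · rw [h3, h4]
        · exact absurd (by rw [← hpq, h3]) (hc.2.2 q h4)
        · exact absurd (by rw [hpq, h4]) (hc.2.2 p h3)
        · exact ih p h3 q h4 hpq
      · exact ih p hp q hq hpq

end Piv
namespace Piv

lemma rho_eq_of_pivot {m n : ℕ} {P : Finset Cell} (hP : IsPlacement (Rect m n) P)
    (X : Cell) (r : ℕ) (h : (X.1, r) ∈ pivL n P) : rho n P X = (r : ℕ∞) := by
  rw [rho, if_pos ⟨r, h⟩]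
  have hset : {r' | (X.1, r') ∈ pivL n P} = {r} := by
    ext r'
    simp only [Set.mem_setOf_eq, Set.mem_singleton_iff]
    constructor
    · intro h'
      have := pivLAux_col_unique hP (X.1, r') h' (X.1, r) h rfl
      exact (Prod.mk.injEq _ _ _ _).mp this |>.2
    · rintro rfl; exact h
  rw [hset, csSup_singleton]

/-- The key construction: if `ρ(X) > row(S₁)` with `X` southwest of `S₁ ∈ P`,
then row `row S₁` receives a pivot in a column strictly between, whose element
`X'` satisfies `ρ(X') = row S₁`. -/
lemma pivot_in_row {m n : ℕ} {P : Finset Cell} (hP : IsPlacement (Rect m n) P)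
    {X S₁ : Cell} (hX : X ∈ P) (hS : S₁ ∈ P) (hcol : X.1 < S₁.1) (hrow : X.2 < S₁.2)
    (hrho : (S₁.2 : ℕ∞) < rho n P X) :
    ∃ X' ∈ P, X.1 < X'.1 ∧ X'.1 < S₁.1 ∧ X'.2 < S₁.2 ∧ rho n P X' = (S₁.2 : ℕ∞) := by
  obtain ⟨hx1, hx1m, hx2, hx2n⟩ := mem_rect_of hP hX
  obtain ⟨hs1, hs1m, hs2, hs2n⟩ := mem_rect_of hP hS
  set r := S₁.2 with hr
  have hr2 : 2 ≤ r := by omega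
  set t := r - 1 with ht
  have htr : t + 1 = r := by omega
  have ht0 : t ≠ 0 := by omega
  set prev := pivLAux P t with hprev
  -- no pivot in column X.1 among `prev`
  have hnopiv : ∀ v ∈ prev, v.1 ≠ X.1 := by
    intro v hv hveq
    have hvmem : (X.1, v.2) ∈ pivL n P := by
      have : v ∈ pivLAux P n := pivLAux_mono P (by omega) hv
      rwa [show ((X.1 : ℕ), v.2) = v by rw [← hveq]] 
    have := rho_eq_of_pivot hP X v.2 hvmem
    rw [this] at hrho
    have hv2 : v.2 ≤ t := (row_of_mem_pivLAux hv).2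
    have : r < v.2 := by exact_mod_cast hrho
    omega
  -- the admissibility condition holds for column X.1
  have hcond : pivCondL P prev r X.1 :=
    ⟨⟨S₁, hS, rfl, hcol⟩, ⟨X, hX, rfl, hrow⟩, hnopiv⟩
  have hex : ∃ c, pivCondL P prev r c := ⟨X.1, hcond⟩
  set c₀ := sSup {c | pivCondL P prev r c} with hc₀
  have hc₀cond : pivCondL P prev r c₀ := pivCond_sSup_mem hP hex
  have hc₀ge : X.1 ≤ c₀ := le_csSup (pivCond_bdd hP prev r) hcond
  -- the pivot (c₀, r) is placed
  have hpiv : (c₀, r) ∈ pivL n P := by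
    have h1 : (c₀, r) ∈ pivLAux P (t + 1) := by
      rw [pivLAux_succ P t ht0, htr, if_pos hex]
      exact Finset.mem_insert_self _ _
    exact pivLAux_mono P (by omega) h1
  obtain ⟨⟨x, hxP, hxr, hxc⟩, ⟨Y, hYP, hYc, hYr⟩, _⟩ := hc₀cond
  -- x is in row r, so x = S₁, giving c₀ < S₁.1
  have hxS : x = S₁ := hP.2.2 x hxP S₁ hS (by rw [hxr])
  have hc₀lt : c₀ < S₁.1 := by rw [← hxS]; exact hxc
  -- c₀ ≠ X.1, else ρ(X) = r
  have hne : X.1 ≠ c₀ := by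
    intro hEq
    have := rho_eq_of_pivot hP X r (by rwa [hEq])
    rw [this] at hrho
    exact absurd hrho (by exact_mod_cast lt_irrefl r)
  refine ⟨Y, hYP, by omega, by omega, hYr, ?_⟩
  exact rho_eq_of_pivot hP Y r (by rwa [hYc])

end Piv
namespace Piv

/-- Prepend `X` to a decreasing sequence. -/
lemma prepend_dec {P : Finset Cell} {k : ℕ} (hk : 0 < k) {S : Fin k → Cell}
    (hS : IsDecSeq P k S) {X : Cell} (hX : X ∈ P)
    (hc : X.1 < (S ⟨0, hk⟩).1) (hr : (S ⟨0, hk⟩).2 < X.2) :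
    ∃ D : Fin (k + 1) → Cell, IsDecSeq P (k + 1) D ∧ D ⟨0, Nat.succ_pos k⟩ = X := by
  refine ⟨fun i => if h : i.1 = 0 then X else S ⟨i.1 - 1, by omega⟩, ⟨?_, ?_⟩, by simp⟩
  · intro i
    by_cases h : i.1 = 0 <;> simp [h]
    · exact hX
    · exact hS.1 _
  · intro i j hij
    have hij' : i.1 < j.1 := hij
    have hj : j.1 ≠ 0 := by omega
    by_cases h : i.1 = 0 <;> simp [h, hj]
    · rcases eq_or_lt_of_le (show 0 ≤ j.1 - 1 by omega) with h1 | h1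
      · have : (⟨j.1 - 1, by omega⟩ : Fin k) = ⟨0, hk⟩ := by
          apply Fin.ext; simp; omega
        rw [this]; exact ⟨hc, hr⟩
      · have h2 := hS.2 ⟨0, hk⟩ ⟨j.1 - 1, by omega⟩ (by simpa using h1)
        exact ⟨hc.trans h2.1, h2.2.trans hr⟩
    · exact hS.2 ⟨i.1 - 1, by omega⟩ ⟨j.1 - 1, by omega⟩ (by simp [Fin.lt_def]; omega)

/-- Replace the first entry of a decreasing sequence (length ≥ 2) by `X` sitting
left of the old first entry and above the second entry. -/
lemma replace_first {P : Finset Cell} {k : ℕ} (hk2 : 2 ≤ k) {S : Fin k → Cell}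
    (hS : IsDecSeq P k S) {X : Cell} (hX : X ∈ P)
    (hc : X.1 < (S ⟨0, by omega⟩).1) (hr : (S ⟨1, by omega⟩).2 < X.2) :
    ∃ D : Fin k → Cell, IsDecSeq P k D ∧ D ⟨0, by omega⟩ = X := by
  refine ⟨fun i => if i.1 = 0 then X else S i, ⟨?_, ?_⟩, by simp⟩
  · intro i
    by_cases h : i.1 = 0 <;> simp [h]
    · exact hX
    · exact hS.1 _
  · intro i j hij
    have hij' : i.1 < j.1 := hij
    have hj : j.1 ≠ 0 := by omega
    by_cases h : i.1 = 0 <;> simp [h, hj]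
    · have hc2 : X.1 < (S j).1 := by
        have h2 := hS.2 ⟨0, by omega⟩ j (by simp [Fin.lt_def]; omega)
        exact hc.trans h2.1
      rcases eq_or_lt_of_le (show 1 ≤ j.1 by omega) with h1 | h1
      · have hj1 : j = (⟨1, by omega⟩ : Fin k) := by
          apply Fin.ext; simp; omega
        rw [hj1]; exact ⟨by rw [← hj1]; exact hc2, hr⟩
      · have h2 := hS.2 ⟨1, by omega⟩ j (by simp [Fin.lt_def]; omega)
        exact ⟨hc2, h2.2.trans hr⟩
    · exact hS.2 i j hij

/-- The tail of a decreasing sequence. -/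
lemma tail_dec {P : Finset Cell} {k : ℕ} {S : Fin k → Cell} (hS : IsDecSeq P k S) :
    IsDecSeq P (k - 1) (fun i : Fin (k - 1) => S ⟨i.1 + 1, by omega⟩) := by
  refine ⟨fun i => hS.1 _, fun i j hij => ?_⟩
  have hij' : i.1 < j.1 := hij
  exact hS.2 _ _ (Fin.mk_lt_mk.mpr (by omega))

/-- Cast a decreasing sequence along an equality of lengths. -/
lemma cast_dec {P : Finset Cell} {k k' : ℕ} (h : k' = k) {S : Fin k → Cell}
    (hS : IsDecSeq P k S) :
    IsDecSeq P k' (fun i : Fin k' => S ⟨i.1, h ▸ i.2⟩) := by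
  refine ⟨fun i => hS.1 _, fun i j hij => ?_⟩
  have hij' : i.1 < j.1 := hij
  exact hS.2 _ _ (Fin.mk_lt_mk.mpr (by omega))

/-- The constant sequence of length 1. -/
lemma singleton_dec {P : Finset Cell} {X : Cell} (hX : X ∈ P) :
    IsDecSeq P 1 (fun _ => X) := by
  refine ⟨fun _ => hX, fun i j hij => absurd hij (by omega)⟩

end Piv
namespace Piv

lemma main {m n : ℕ} {P : Finset Cell} (hP : IsPlacement (Rect m n) P) :
    ∀ N : ℕ, ∀ k : ℕ, ∀ hk : 0 < k, ∀ S : Fin k → Cell, IsDecSeq P k S →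
      ∀ X : Cell, X ∈ P → X.1 < (S ⟨0, hk⟩).1 → X.2 < (S ⟨0, hk⟩).2 →
      (S ⟨0, hk⟩).2 ≤ N →
      ((((S ⟨0, hk⟩).2 : ℕ∞) < rho n P X →
        ∃ D : Fin (k + 1) → Cell, IsDecSeq P (k + 1) D ∧ D ⟨0, Nat.succ_pos k⟩ = X) ∧
       (∀ l : ℕ, ∀ hl : 0 < l, ∀ I : Fin l → Cell, IsPivotPath n P l I →
          I ⟨0, hl⟩ = X → I ⟨l - 1, by omega⟩ = S ⟨0, hk⟩ →
          ∃ D : Fin k → Cell, IsDecSeq P k D ∧ D ⟨0, hk⟩ = X)) := by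
  intro N
  induction N using Nat.strong_induction_on with
  | _ N IH =>
  -- Part B at level N, by strong induction on the path length l.
  have hB : ∀ l : ℕ, ∀ _hl : 0 < l, ∀ k : ℕ, ∀ hk : 0 < k, ∀ S : Fin k → Cell,
      IsDecSeq P k S → ∀ X : Cell, X ∈ P → X.1 < (S ⟨0, hk⟩).1 →
      X.2 < (S ⟨0, hk⟩).2 → (S ⟨0, hk⟩).2 ≤ N →
      ∀ I : Fin l → Cell, IsPivotPath n P l I → I ⟨0, ‹0 < l›⟩ = X →
      I ⟨l - 1, by omega⟩ = S ⟨0, hk⟩ →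
      ∃ D : Fin k → Cell, IsDecSeq P k D ∧ D ⟨0, hk⟩ = X := by
    intro l
    induction l using Nat.strong_induction_on with
    | _ l IHl =>
    intro hl k hk S hS X hX hc hr hN I hI hI0 hIl
    rcases Nat.lt_or_ge l 2 with hl2 | hl2
    · -- l = 1 is impossible since X ≠ S₁
      exfalso
      have hXS : X = S ⟨0, hk⟩ := by
        rw [← hI0, ← hIl]
        congr 1
        apply Fin.ext
        simp; omega
      rw [hXS] at hc; omega
    -- l ≥ 2
    have hI₁P : I ⟨1, by omega⟩ ∈ P := hI.1.1 _
    have h01 : X.1 < (I ⟨1, by omega⟩).1 ∧ X.2 < (I ⟨1, by omega⟩).2 := by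
      have := hI.1.2 ⟨0, hl⟩ ⟨1, by omega⟩ (Fin.mk_lt_mk.mpr (by omega))
      rwa [hI0] at this
    have hrhoX : rho n P X = ((I ⟨1, by omega⟩).2 : ℕ∞) := by
      have h9 : (0:ℕ) + 1 < l := by omega
      have := hI.2 ⟨0, hl⟩ h9
      rw [hI0] at this
      convert this using 3
    -- a decreasing sequence of length k starting at I₁
    have hD'ex : (∃ D' : Fin k → Cell, IsDecSeq P k D' ∧ D' ⟨0, hk⟩ = I ⟨1, by omega⟩) ∧
        (I ⟨1, by omega⟩).2 ≤ (S ⟨0, hk⟩).2 := by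
      rcases eq_or_lt_of_le hl2 with hl2' | hl3
      · -- l = 2 : I₁ = S₁, take D' = S
        have hIS : I ⟨1, by omega⟩ = S ⟨0, hk⟩ := by
          rw [← hIl]; congr 1; apply Fin.ext; simp; omega
        exact ⟨⟨S, hS, hIS.symm⟩, le_of_eq (by rw [hIS])⟩
      · -- l ≥ 3 : recurse on the tail path
        have hI₁S : (I ⟨1, by omega⟩).1 < (S ⟨0, hk⟩).1 ∧
            (I ⟨1, by omega⟩).2 < (S ⟨0, hk⟩).2 := by
          have := hI.1.2 ⟨1, by omega⟩ ⟨l - 1, by omega⟩ (Fin.mk_lt_mk.mpr (by omega))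
          rwa [hIl] at this
        have hI'path : IsPivotPath n P (l-1) (fun i : Fin (l-1) => I ⟨i.1 + 1, by omega⟩) := by
          refine ⟨⟨fun i => hI.1.1 _, fun i j hij => ?_⟩, fun i h => ?_⟩
          · have hij' : i.1 < j.1 := hij
            exact hI.1.2 _ _ (Fin.mk_lt_mk.mpr (by omega))
          · have h2 : i.1 + 1 + 1 < l := by omega
            have := hI.2 ⟨i.1 + 1, by omega⟩ h2
            convert this using 3
        have := IHl (l-1) (by omega) (by omega) k hk S hS (I ⟨1, by omega⟩) hI₁P
          hI₁S.1 hI₁S.2 hN (fun i : Fin (l-1) => I ⟨i.1 + 1, by omega⟩) hI'path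
          (by congr 1)
          (by
            show I ⟨(l - 1 - 1) + 1, by omega⟩ = S ⟨0, hk⟩
            rw [← hIl]
            congr 1
            apply Fin.ext
            simp
            omega)
        exact ⟨this, le_of_lt hI₁S.2⟩
    obtain ⟨⟨D', hD', hD'0⟩, hI₁le⟩ := hD'ex
    rcases Nat.lt_or_ge k 2 with hk2 | hk2
    · have hk1 : k = 1 := by omega
      subst hk1
      exact ⟨fun _ => X, singleton_dec hX, rfl⟩
    -- k ≥ 2; compare X with D'₂
    have h12' := hD'.2 ⟨0, hk⟩ ⟨1, by omega⟩ (Fin.mk_lt_mk.mpr (by omega))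
    have hD₂P : D' ⟨1, by omega⟩ ∈ P := hD'.1 _
    rcases lt_trichotomy X.2 (D' ⟨1, by omega⟩).2 with hlt | heq | hgt
    · -- recurse through part A (with smaller first row) on the tail of D'
      have hD₂N : (D' ⟨1, by omega⟩).2 < N := by
        have h3 := h12'.2; rw [hD'0] at h3; omega
      have hk1 : 0 < k - 1 := by omega
      have htail : IsDecSeq P (k-1) (fun i : Fin (k-1) => D' ⟨i.1 + 1, by omega⟩) :=
        tail_dec hD'
      have htl0 : (fun i : Fin (k-1) => D' ⟨i.1 + 1, by omega⟩) ⟨0, hk1⟩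
          = D' ⟨1, by omega⟩ := by congr 1
      have hcols : X.1 < ((fun i : Fin (k-1) => D' ⟨i.1 + 1, by omega⟩) ⟨0, hk1⟩).1 := by
        rw [htl0]
        have h3 := h12'.1; rw [hD'0] at h3; omega
      have hrows : X.2 < ((fun i : Fin (k-1) => D' ⟨i.1 + 1, by omega⟩) ⟨0, hk1⟩).2 := by
        rw [htl0]; exact hlt
      have hrho' : (((fun i : Fin (k-1) => D' ⟨i.1 + 1, by omega⟩) ⟨0, hk1⟩).2 : ℕ∞)
          < rho n P X := by
        rw [htl0, hrhoX]
        exact_mod_cast (by have h3 := h12'.2; rw [hD'0] at h3; exact h3)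
      have hlev : ((fun i : Fin (k-1) => D' ⟨i.1 + 1, by omega⟩) ⟨0, hk1⟩).2
          ≤ (D' ⟨1, by omega⟩).2 := by rw [htl0]
      obtain ⟨Dc, hDc, hDc0⟩ := (IH (D' ⟨1, by omega⟩).2 hD₂N (k-1) hk1 _ htail X hX
        hcols hrows hlev).1 hrho'
      refine ⟨fun i : Fin k => Dc ⟨i.1, by omega⟩, cast_dec (by omega) hDc, ?_⟩
      exact hDc0
    · -- rows equal forces X = D'₂, impossible
      exfalso
      have hXD : X = D' ⟨1, by omega⟩ := hP.2.2 X hX _ hD₂P heq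
      have h3 := h12'.1; rw [hD'0] at h3
      have : X.1 < (D' ⟨1, by omega⟩).1 := by omega
      rw [hXD] at this; omega
    · -- replace the first element of D' by X
      have hcX : X.1 < (D' ⟨0, by omega⟩).1 := by
        have : D' ⟨0, (by omega : 0 < k)⟩ = D' ⟨0, hk⟩ := by congr 1
        rw [this, hD'0]; exact h01.1
      obtain ⟨D, hD, hD0⟩ := replace_first hk2 hD' hX hcX hgt
      exact ⟨D, hD, hD0⟩
  -- Part A at level N
  intro k hk S hS X hX hc hr hN
  refine ⟨?_, fun l hl I hI hI0 hIl => hB l hl k hk S hS X hX hc hr hN I hI hI0 hIl⟩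
  intro hrho
  obtain ⟨X', hX'P, hXX', hX'S, hX'row, hX'rho⟩ :=
    pivot_in_row hP hX (hS.1 ⟨0, hk⟩) hc hr hrho
  -- the pivot path X' → S₁ of length 2
  have hpath : IsPivotPath n P 2
      (fun i : Fin 2 => if i.1 = 0 then X' else S ⟨0, hk⟩) := by
    refine ⟨⟨fun i => ?_, fun i j hij => ?_⟩, fun i h => ?_⟩
    · by_cases h : i.1 = 0 <;> simp [h]
      · exact hX'P
      · exact hS.1 _
    · have hij' : i.1 < j.1 := hij
      have hi0 : i.1 = 0 := by omega
      have hj1 : j.1 = 1 := by omega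
      simp [hi0, hj1]
      exact ⟨hX'S, hX'row⟩
    · have hi0 : i.1 = 0 := by omega
      simp [hi0]
      exact hX'rho
  obtain ⟨D', hD', hD'0⟩ := hB 2 (by omega) k hk S hS X' hX'P hX'S hX'row hN
    (fun i : Fin 2 => if i.1 = 0 then X' else S ⟨0, hk⟩) hpath (by simp) (by norm_num)
  rcases lt_trichotomy X.2 X'.2 with hlt | heq | hgt
  · -- recurse part A at the strictly lower level X'.2
    have hX'N : X'.2 < N := by omega
    have hcols : X.1 < (D' ⟨0, hk⟩).1 := by rw [hD'0]; exact hXX'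
    have hrows : X.2 < (D' ⟨0, hk⟩).2 := by rw [hD'0]; exact hlt
    have hlev : (D' ⟨0, hk⟩).2 ≤ X'.2 := by rw [hD'0]
    have hrho' : ((D' ⟨0, hk⟩).2 : ℕ∞) < rho n P X := by
      rw [hD'0]
      calc (X'.2 : ℕ∞) < ((S ⟨0, hk⟩).2 : ℕ∞) := by exact_mod_cast hX'row
        _ < rho n P X := hrho
    exact (IH X'.2 hX'N k hk D' hD' X hX hcols hrows hlev).1 hrho'
  · exfalso
    have : X = X' := hP.2.2 X hX X' hX'P heq
    rw [this] at hXX'; omega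
  · -- prepend X to D'
    have hcols : X.1 < (D' ⟨0, hk⟩).1 := by rw [hD'0]; exact hXX'
    have hrows : (D' ⟨0, hk⟩).2 < X.2 := by rw [hD'0]; exact hgt
    exact prepend_dec hk hD' hX hcols hrows

end Piv

/-- **Lemma.** Let `S` be a decreasing sequence of length `k` in `P` and `X ∈ P` with
`X S₁` a 12-pattern. If `ρ(X) > row(S₁)` there is a decreasing sequence of length
`k + 1` starting at `X`; and if `X` and `S₁` are the first and last elements of a
pivot-path, there is a decreasing sequence of length `k` starting at `X`. -/
theorem lemma_pivot4 (m n : ℕ) (P : Finset Cell) (hP : IsPlacement (Rect m n) P)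
    (k : ℕ) (hk : 0 < k) (S : Fin k → Cell) (hS : IsDecSeq P k S)
    (X : Cell) (hX : X ∈ P)
    (h12 : X.1 < (S ⟨0, hk⟩).1 ∧ X.2 < (S ⟨0, hk⟩).2) :
    (((S ⟨0, hk⟩).2 : ℕ∞) < rho n P X →
      ∃ D : Fin (k + 1) → Cell, IsDecSeq P (k + 1) D ∧ D ⟨0, by omega⟩ = X) ∧
    ((∃ (l : ℕ) (hl : 0 < l) (I : Fin l → Cell), IsPivotPath n P l I ∧
        I ⟨0, hl⟩ = X ∧ I ⟨l - 1, by omega⟩ = S ⟨0, hk⟩) →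
      ∃ D : Fin k → Cell, IsDecSeq P k D ∧ D ⟨0, hk⟩ = X) := by
  have h := Piv.main hP (S ⟨0, hk⟩).2 k hk S hS X hX h12.1 h12.2 le_rfl
  refine ⟨h.1, ?_⟩
  rintro ⟨l, hl, I, hpath, hI0, hIl⟩
  exact h.2 l hl I hpath hI0 hIl
end
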